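/- arXiv:1505.03697 — 8 statements merged into one kernel-verified Lean document; each statement's English description precedes it below -/
import Mathlib

section
/- Let k ≥ 3 and let i ∈ {2, ..., k-1}. Let T = [k] \ {i} ⊂ ℤ, i.e. an interval of length k with one interior point removed. Then for any d ≥ 1 and any point x ∈ (ℤ/kℤ)^d, the set (ℤ/kℤ)^d \ {x} can be partitioned into copies of T, where a copy of T is a translate of the image of T in one coordinate direction (i.e. a set of the form {y + t·e_j : t ∈ T} for some y ∈ (ℤ/kℤ)^d and coordinate direction e_j, with T projected mod k). -/
/-!
Modulo `k`, the tile `[k] \ {i}` is the complement of the single residue `i`, so its copies are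
exactly the coordinate lines with one point removed. Group the points `z ≠ x` by the first
coordinate `j` at which `z` differs from `x` and by the remaining coordinates of `z`: each group
is the line in direction `j` through the point obtained from `z` by resetting coordinate `j` to
`x j`, with that point removed.
-/

/-- A copy of the tile `T ⊆ G` in `G^d`, placed in coordinate direction `j`
and translated by `y`. -/
def IsCopy {G : Type*} [AddCommGroup G] {d : ℕ} (T : Set G)
    (S : Set (Fin d → G)) : Prop :=
  ∃ (j : Fin d) (y : Fin d → G),
    S = {z | ∃ t ∈ T, z = Function.update y j (y j + t)}

/-- `X ⊆ G^d` is `T`-tilable: it partitions into copies of `T` placed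
in the coordinate directions. -/
def Tilable {G : Type*} [AddCommGroup G] {d : ℕ} (T : Set G)
    (X : Set (Fin d → G)) : Prop :=
  ∃ P : Set (Set (Fin d → G)),
    (∀ S ∈ P, IsCopy T S) ∧ P.PairwiseDisjoint id ∧ ⋃₀ P = X

section PuncturedLine

variable {G : Type*} {d : ℕ}

/-- The line through `y` in direction `j`, with `y` itself removed. -/
def puncturedLine (j : Fin d) (y : Fin d → G) : Set (Fin d → G) :=
  {z | z j ≠ y j ∧ ∀ i ≠ j, z i = y i}

lemma mem_puncturedLine {j : Fin d} {y z : Fin d → G} :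
    z ∈ puncturedLine j y ↔ z j ≠ y j ∧ ∀ i ≠ j, z i = y i :=
  Iff.rfl

lemma eq_update_of_mem_puncturedLine {j : Fin d} {y z : Fin d → G}
    (hz : z ∈ puncturedLine j y) : y = Function.update z j (y j) := by
  funext i
  by_cases hij : i = j
  · subst hij
    simp
  · simp [Function.update_of_ne hij, hz.2 i hij]

lemma isCopy_puncturedLine [AddCommGroup G] (a : G) (j : Fin d) (y : Fin d → G) :
    IsCopy ({a}ᶜ : Set G) (puncturedLine j y) := by
  refine ⟨j, Function.update y j (y j - a), ?_⟩
  ext z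
  simp only [mem_puncturedLine, Set.mem_ofPred_eq, Set.mem_compl_iff, Set.mem_singleton_iff,
    Function.update_self]
  constructor
  · rintro ⟨hzj, hz⟩
    refine ⟨z j - (y j - a), fun h => hzj (by rw [sub_eq_iff_eq_add.mp h]; abel), ?_⟩
    funext i
    by_cases hij : i = j
    · subst hij
      simp
    · simp [Function.update_of_ne hij, hz i hij]
  · rintro ⟨t, ht, rfl⟩
    refine ⟨fun h => ht ?_, fun i hij => by simp [Function.update_of_ne hij]⟩
    rwa [Function.update_self, sub_add_comm, add_eq_right, sub_eq_zero] at h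

def puncturedLinesAt (x : Fin d → G) : Set (Set (Fin d → G)) :=
  {S | ∃ j y, (∀ i ≤ j, y i = x i) ∧ S = puncturedLine j y}

lemma exists_mem_puncturedLinesAt_of_ne {x z : Fin d → G} (hz : z ≠ x) :
    ∃ S ∈ puncturedLinesAt x, z ∈ S := by
  obtain ⟨j, hj, hmin⟩ := wellFounded_lt.has_min {j | z j ≠ x j} (Function.ne_iff.mp hz)
  refine ⟨_, ⟨j, Function.update z j (x j), fun i hij => ?_, rfl⟩, ?_⟩
  · rcases hij.lt_or_eq with hij | rfl
    · rw [Function.update_of_ne hij.ne]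
      exact not_not.mp fun h => hmin i h hij
    · simp
  · exact ⟨by simpa using hj, fun i hij => by simp [Function.update_of_ne hij]⟩

lemma ne_of_mem_puncturedLinesAt {x z : Fin d → G} {S : Set (Fin d → G)}
    (hS : S ∈ puncturedLinesAt x) (hz : z ∈ S) : z ≠ x := by
  obtain ⟨j, y, hy, rfl⟩ := hS
  rintro rfl
  exact hz.1 (hy j le_rfl).symm

/-- Two lines meeting at `z` have the same direction, namely the first coordinate at which `z`
differs from `x`; lines in the same direction through `z` coincide. -/
lemma pairwiseDisjoint_puncturedLinesAt (x : Fin d → G) :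
    (puncturedLinesAt x).PairwiseDisjoint id := by
  rintro _ ⟨j, y, hy, rfl⟩ _ ⟨j', y', hy', rfl⟩ hne
  refine Set.disjoint_left.mpr fun z hz hz' => hne ?_
  rcases lt_trichotomy j j' with h | rfl | h
  · exact absurd ((hz'.2 j h.ne).trans (hy' j h.le)) (hy j le_rfl ▸ hz.1)
  · rw [eq_update_of_mem_puncturedLine hz, eq_update_of_mem_puncturedLine hz',
      hy j le_rfl, hy' j le_rfl]
  · exact absurd ((hz.2 j' h.ne).trans (hy j' h.le)) (hy' j' le_rfl ▸ hz'.1)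

lemma sUnion_puncturedLinesAt (x : Fin d → G) : ⋃₀ puncturedLinesAt x = {x}ᶜ := by
  ext z
  simp only [Set.mem_sUnion, Set.mem_compl_iff, Set.mem_singleton_iff]
  exact ⟨fun ⟨_, hS, hz⟩ => ne_of_mem_puncturedLinesAt hS hz, exists_mem_puncturedLinesAt_of_ne⟩

theorem tilable_compl_singleton [AddCommGroup G] (a : G) (x : Fin d → G) :
    Tilable ({a}ᶜ : Set G) ({x}ᶜ : Set (Fin d → G)) :=
  ⟨puncturedLinesAt x, fun _ ⟨j, y, _, hS⟩ => hS ▸ isCopy_puncturedLine a j y,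
    pairwiseDisjoint_puncturedLinesAt x, sUnion_puncturedLinesAt x⟩

end PuncturedLine

lemma ZMod.natCast_image_Icc_one_diff {k i : ℕ} (hi : 0 < i) (hik : i < k) :
    (fun n : ℕ => (n : ZMod k)) '' {n : ℕ | 1 ≤ n ∧ n ≤ k ∧ n ≠ i} = {(i : ZMod k)}ᶜ := by
  have : NeZero k := ⟨by omega⟩
  ext t
  simp only [Set.mem_image, Set.mem_ofPred_eq, Set.mem_compl_iff, Set.mem_singleton_iff]
  constructor
  · rintro ⟨n, ⟨-, hnk, hni⟩, rfl⟩ h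
    rw [ZMod.natCast_eq_natCast_iff' n i k, Nat.mod_eq_of_lt hik] at h
    rcases hnk.lt_or_eq with hnk | rfl
    · exact hni (by rwa [Nat.mod_eq_of_lt hnk] at h)
    · rw [Nat.mod_self] at h
      omega
  · intro ht
    by_cases ht₀ : t = 0
    · exact ⟨k, ⟨by omega, le_rfl, by omega⟩, by simp [ht₀]⟩
    · refine ⟨t.val, ⟨?_, (ZMod.val_lt t).le, ?_⟩, ZMod.natCast_zmod_val t⟩
      · exact Nat.pos_of_ne_zero ((ZMod.val_eq_zero t).not.mpr ht₀)
      · intro h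
        exact ht (h ▸ (ZMod.natCast_zmod_val t).symm)

theorem coverButOne_general (k i : ℕ) (hi₁ : 2 ≤ i) (hi₂ : i ≤ k - 1)
    (d : ℕ) (x : Fin d → ZMod k) :
    Tilable ((fun n : ℕ => (n : ZMod k)) '' {n : ℕ | 1 ≤ n ∧ n ≤ k ∧ n ≠ i})
      ({x}ᶜ : Set (Fin d → ZMod k)) := by
  rw [ZMod.natCast_image_Icc_one_diff (by omega) (by omega)]
  exact tilable_compl_singleton _ x

/-- for `T = [k] \ {i}` (an interval with an interior point
removed), any `(ℤ/kℤ)^d` minus one point is `T`-tilable. -/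
theorem coverButOne (k i : ℕ) (hk : 3 ≤ k) (hi₁ : 2 ≤ i) (hi₂ : i ≤ k - 1)
    (d : ℕ) (hd : 1 ≤ d) (x : Fin d → ZMod k) :
    Tilable ((fun n : ℕ => (n : ZMod k)) '' {n : ℕ | 1 ≤ n ∧ n ≤ k ∧ n ≠ i})
      ({x}ᶜ : Set (Fin d → ZMod k)) :=
  coverButOne_general k i hi₁ hi₂ d x
end

section
/- Let k ≥ 3, i ∈ {2, ..., k-1}, and T = [k] \ {i} regarded as a tile in ℤ/kℤ. Suppose d ≥ 1 and X ⊂ (ℤ/kℤ)^d is a hole, i.e. (ℤ/kℤ)^d \ X is T-tilable. Then for each x ∈ X, the set ((X \ {x}) × {0}) ∪ {(0,...,0,k-1)} ⊂ (ℤ/kℤ)^{d+1} is a hole in (ℤ/kℤ)^{d+1}. -/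
/-- `X` is a hole in `G^d` if its complement is `T`-tilable. -/
def IsHole {G : Type*} [AddCommGroup G] {d : ℕ} (T : Set G)
    (X : Set (Fin d → G)) : Prop :=
  Tilable T ({z : Fin d → G | z ∉ X})

open Function

theorem Fin.eq_snoc_iff {α : Type*} {m : ℕ} {z : Fin (m + 1) → α} {y : Fin m → α} {b : α} :
    z = Fin.snoc y b ↔ Fin.init z = y ∧ z (Fin.last m) = b := by
  rw [← Fin.snoc_init_self z, Fin.snoc_inj, Fin.init_snoc, Fin.snoc_last]

section Tiling

variable {G : Type*} [AddCommGroup G] {T : Set G} {m : ℕ}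

theorem tilable_empty : Tilable T (∅ : Set (Fin m → G)) :=
  ⟨∅, by simp, Set.pairwiseDisjoint_empty, Set.sUnion_empty⟩

theorem IsCopy.tilable {S : Set (Fin m → G)} (h : IsCopy T S) : Tilable T S :=
  ⟨{S}, by simpa using h, Set.pairwiseDisjoint_singleton _ _, Set.sUnion_singleton S⟩

theorem Tilable.iUnion {ι : Type*} {A : ι → Set (Fin m → G)} (h : ∀ i, Tilable T (A i))
    (hd : Pairwise (Disjoint on A)) : Tilable T (⋃ i, A i) := by
  choose P hcopy hdisj hunion using h
  have hsub {i S} (hS : S ∈ P i) : S ⊆ A i := hunion i ▸ Set.subset_sUnion_of_mem hS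
  refine ⟨⋃ i, P i, ?_, ?_, by rw [Set.sUnion_iUnion]; exact Set.iUnion_congr hunion⟩
  · simp only [Set.mem_iUnion]
    rintro S ⟨i, hS⟩
    exact hcopy i S hS
  · simp only [Set.PairwiseDisjoint, Set.Pairwise, Set.mem_iUnion]
    rintro S ⟨i, hS⟩ S' ⟨j, hS'⟩ hne
    obtain rfl | hij := eq_or_ne i j
    · exact hdisj i hS hS' hne
    · exact (hd hij).mono (hsub hS) (hsub hS')

theorem Tilable.union {A B : Set (Fin m → G)} (hA : Tilable T A) (hB : Tilable T B)
    (hd : Disjoint A B) : Tilable T (A ∪ B) := by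
  rw [Set.union_eq_iUnion]
  refine Tilable.iUnion (Bool.forall_bool.mpr ⟨hB, hA⟩) ?_
  rintro (_ | _) (_ | _) hne
  exacts [absurd rfl hne, hd.symm, hd, absurd rfl hne]

theorem IsCopy.image_snoc {S : Set (Fin m → G)} (h : IsCopy T S) (c : G) :
    IsCopy T ((Fin.snoc · c) '' S) := by
  obtain ⟨j, y, rfl⟩ := h
  refine ⟨j.castSucc, Fin.snoc y c, ?_⟩
  ext z
  simp [Fin.snoc_update, eq_comm]

theorem Tilable.image_snoc {S : Set (Fin m → G)} (h : Tilable T S) (c : G) :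
    Tilable T ((Fin.snoc · c) '' S) := by
  obtain ⟨P, hcopy, hdisj, rfl⟩ := h
  have hinj : Injective (Fin.snoc · c : (Fin m → G) → Fin (m + 1) → G) :=
    Fin.snoc_left_injective (α := fun _ => G) c
  refine ⟨Set.image (Fin.snoc · c) '' P, ?_, ?_, Set.image_sUnion.symm⟩
  · rintro _ ⟨S, hS, rfl⟩
    exact (hcopy S hS).image_snoc c
  · rw [(Set.image_injective.mpr hinj).injOn.pairwiseDisjoint_image]
    exact fun S hS S' hS' hne => (Set.disjoint_image_iff hinj).mpr (hdisj hS hS' hne)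

theorem isCopy_punctured_column (a : G) (x : Fin m → G) (w : G) :
    IsCopy {a}ᶜ {z : Fin (m + 1) → G | Fin.init z = x ∧ z (Fin.last m) ≠ w} := by
  refine ⟨Fin.last m, Fin.snoc x (w - a), ?_⟩
  ext z
  simp only [Set.mem_ofPred_eq, Fin.snoc_last, Fin.update_snoc_last, Fin.eq_snoc_iff,
    Set.mem_compl_singleton_iff]
  constructor
  · rintro ⟨rfl, hw⟩
    exact ⟨z (Fin.last m) - w + a, by simpa [sub_eq_zero] using hw, rfl, by abel⟩
  · rintro ⟨t, ht, rfl, hz⟩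
    refine ⟨rfl, fun h => ht ?_⟩
    rw [hz] at h
    exact add_left_cancel (h.trans (sub_add_cancel w a).symm)

theorem tilable_layers_union_punctured_column {a w : G} {x : Fin m → G}
    {L : G → Set (Fin m → G)} (hL : ∀ c, Tilable {a}ᶜ (L c)) (hx : ∀ c ≠ w, x ∉ L c) :
    Tilable {a}ᶜ {z : Fin (m + 1) → G |
      Fin.init z ∈ L (z (Fin.last m)) ∨ (Fin.init z = x ∧ z (Fin.last m) ≠ w)} := by
  have hlayers : {z : Fin (m + 1) → G | Fin.init z ∈ L (z (Fin.last m))} =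
      ⋃ c, (Fin.snoc · c) '' L c := by
    ext z
    simp only [Set.mem_ofPred_eq, Set.mem_iUnion, Set.mem_image]
    constructor
    · exact fun hz => ⟨_, _, hz, Fin.snoc_init_self z⟩
    · rintro ⟨c, z', hz', rfl⟩
      simpa using hz'
  rw [Set.ofPred_or, hlayers]
  refine Tilable.union (Tilable.iUnion (fun c => (hL c).image_snoc c) ?_)
    (isCopy_punctured_column a x w).tilable ?_
  · intro c c' hne
    refine Set.disjoint_left.mpr ?_
    rintro _ ⟨z, -, rfl⟩ ⟨z', -, h⟩
    exact hne (Fin.snoc_inj.mp h).2.symm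
  · refine Set.disjoint_left.mpr ?_
    simp only [Set.mem_iUnion, Set.mem_image]
    rintro _ ⟨c, z, hz, rfl⟩ ⟨hinit, hw⟩
    rw [Fin.init_snoc] at hinit
    rw [Fin.snoc_last] at hw
    exact hx c hw (hinit ▸ hz)

theorem tilable_compl_singleton_s1 (a : G) : ∀ {m : ℕ} (p : Fin m → G), Tilable {a}ᶜ {p}ᶜ
  | 0, p => by
    convert tilable_empty
    ext z
    simp [Subsingleton.elim z p]
  | _ + 1, p => by
    convert tilable_layers_union_punctured_column (fun _ => tilable_compl_singleton_s1 a (Fin.init p))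
      (w := p (Fin.last _)) (fun _ _ h => h rfl) using 1
    ext z
    rw [Set.mem_compl_singleton_iff, ← Fin.snoc_init_self p, Ne, Fin.eq_snoc_iff]
    simp only [Set.mem_ofPred_eq, Set.mem_compl_singleton_iff, Fin.init_snoc, Fin.snoc_last]
    tauto

end Tiling

theorem ZMod.natCast_image_Icc_ne {k i : ℕ} (hi : 1 ≤ i) (hik : i ≤ k) :
    (fun n : ℕ => (n : ZMod k)) '' {n : ℕ | 1 ≤ n ∧ n ≤ k ∧ n ≠ i} = {(i : ZMod k)}ᶜ := by
  have : NeZero k := ⟨by omega⟩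
  ext t
  simp only [Set.mem_image, Set.mem_ofPred_eq, Set.mem_compl_singleton_iff]
  constructor
  · rintro ⟨n, ⟨hn, hnk, hni⟩, rfl⟩ h
    obtain ⟨n, rfl⟩ := Nat.exists_eq_add_of_le' hn
    obtain ⟨i, rfl⟩ := Nat.exists_eq_add_of_le' hi
    exact hni (congrArg (· + 1) (((ZMod.natCast_eq_natCast_iff _ _ _).mp h).add_right_cancel' 1
      |>.eq_of_lt_of_lt (by omega) (by omega)))
  · intro ht
    obtain rfl | h0 := eq_or_ne t 0
    · refine ⟨k, ⟨by omega, le_rfl, ?_⟩, ZMod.natCast_self k⟩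
      intro hki
      exact ht (by rw [← hki, ZMod.natCast_self])
    · refine ⟨t.val, ⟨Nat.one_le_iff_ne_zero.mpr ((ZMod.val_ne_zero t).mpr h0), (ZMod.val_lt t).le,
        ?_⟩, ZMod.natCast_zmod_val t⟩
      rintro h
      exact ht (h ▸ ZMod.natCast_zmod_val t).symm

theorem movePoint_general (k i : ℕ) (hk : 3 ≤ k) (hi₁ : 2 ≤ i) (hi₂ : i ≤ k - 1)
    (d : ℕ)
    (T : Set (ZMod k))
    (hT : T = (fun n : ℕ => (n : ZMod k)) '' {n : ℕ | 1 ≤ n ∧ n ≤ k ∧ n ≠ i})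
    (X : Set (Fin d → ZMod k)) (hX : IsHole T X) (x : Fin d → ZMod k)
    (hx : x ∈ X) :
    IsHole T
      ({z : Fin (d + 1) → ZMod k |
          (Fin.init z ∈ X \ {x} ∧ z (Fin.last d) = 0)} ∪
        {Fin.snoc (0 : Fin d → ZMod k) (((k - 1 : ℕ) : ZMod k))}) := by
  rw [ZMod.natCast_image_Icc_ne (by omega) (by omega)] at hT
  subst hT
  set top : ZMod k := ((k - 1 : ℕ) : ZMod k)
  have htop : top ≠ 0 := fun h =>
    absurd (Nat.le_of_dvd (by omega) ((ZMod.natCast_eq_zero_iff _ _).mp h)) (by omega)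
  let L : ZMod k → Set (Fin d → ZMod k) := fun c =>
    if c = 0 then Xᶜ else if c = top then {0}ᶜ else {x}ᶜ
  have hL : ∀ c, Tilable {(i : ZMod k)}ᶜ (L c) := by
    intro c
    simp only [L]
    split_ifs
    exacts [hX, tilable_compl_singleton_s1 _ _, tilable_compl_singleton_s1 _ _]
  have hxL : ∀ c ≠ top, x ∉ L c := by
    intro c hc
    simp only [L, if_neg hc]
    split_ifs <;> simp [hx]
  unfold IsHole
  convert tilable_layers_union_punctured_column hL hxL using 1
  ext z
  simp only [Set.mem_ofPred_eq, Set.mem_union, Set.mem_sdiff, Set.mem_singleton_iff,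
    Fin.eq_snoc_iff, L]
  by_cases h0 : z (Fin.last d) = 0 <;> by_cases ht : z (Fin.last d) = top <;>
    by_cases hzx : Fin.init z = x <;> simp_all

/-- if `X` is a hole in `(ℤ/kℤ)^d` and `x ∈ X`, then
`((X \ {x}) × {0}) ∪ {(0,…,0,k-1)}` is a hole in `(ℤ/kℤ)^{d+1}`. -/
theorem movePoint (k i : ℕ) (hk : 3 ≤ k) (hi₁ : 2 ≤ i) (hi₂ : i ≤ k - 1)
    (d : ℕ) (hd : 1 ≤ d)
    (T : Set (ZMod k))
    (hT : T = (fun n : ℕ => (n : ZMod k)) '' {n : ℕ | 1 ≤ n ∧ n ≤ k ∧ n ≠ i})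
    (X : Set (Fin d → ZMod k)) (hX : IsHole T X) (x : Fin d → ZMod k)
    (hx : x ∈ X) :
    IsHole T
      ({z : Fin (d + 1) → ZMod k |
          (Fin.init z ∈ X \ {x} ∧ z (Fin.last d) = 0)} ∪
        {Fin.snoc (0 : Fin d → ZMod k) (((k - 1 : ℕ) : ZMod k))}) :=
  movePoint_general k i hk hi₁ hi₂ d T hT X hX x hx
end

section
/- Let t ≥ 1 and b ≥ 0 be integers, T a finite non-empty subset of ℤ^b, and f : ℤ^b → ℤ any function. Then there exists a function g : ℤ^b → {0, 1, ..., t-1} such that for every x ∈ ℤ^b, ∑_{y ∈ T} g(x - y) ≡ f(x) (mod t). -/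
/-!
Order the group `A` (for `ℤ^b`: lexicographically) so that translations are monotone, and let
`y₀` be the largest element of `T`. If `x₀` is the smallest point of a finite set `X`, then
`x - y > x₀ - y₀` for every other `x ∈ X` and `y ∈ T`, so the value `g (x₀ - y₀)` enters no
other equation of `X` and can be chosen last to satisfy the equation at `x₀`. Thus every finite
set of equations is solvable, and since `g` takes values in the finite group `ℤ/t`, an
ultrafilter limit of these finite solutions solves all equations at once.
-/

open Filter

theorem exists_forall_of_forall_finset {ι α β : Type*} [Finite β] (s : ι → Finset α)
    (P : ι → (α → β) → Prop) (hP : ∀ i g g', (∀ a ∈ s i, g a = g' a) → P i g → P i g')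
    (h : ∀ I : Finset ι, ∃ g, ∀ i ∈ I, P i g) : ∃ g, ∀ i, P i g := by
  choose G hG using h
  obtain ⟨U, hU⟩ := exists_ultrafilter_le (atTop : Filter (Finset ι))
  have hlim : ∀ a, ∃ v, ∀ᶠ I in (U : Filter (Finset ι)), G I a = v := fun a ↦
    (Ultrafilter.eq_pure_of_finite (U.map (G · a))).imp fun v (hv : U.map (G · a) = pure v) ↦
      Ultrafilter.mem_map.1 (hv ▸ Ultrafilter.mem_pure.2 rfl : {v} ∈ U.map (G · a))
  choose g hg using hlim
  refine ⟨g, fun i ↦ ?_⟩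
  have hmem : ∀ᶠ I in (U : Filter (Finset ι)), i ∈ I :=
    hU (eventually_ge_atTop {i} |>.mono fun I hI ↦ Finset.singleton_subset_iff.1 hI)
  obtain ⟨I, hiI, hI⟩ := (hmem.and ((eventually_all_finset (s i)).2 fun a _ ↦ hg a)).exists
  exact hP i (G I) g hI (hG I i hiI)

section

variable {A R : Type*} [AddCommGroup A] [LinearOrder A] [IsOrderedAddMonoid A] [AddCommGroup R]

theorem exists_sum_sub_eq_on_finset (T : Finset A) (hT : T.Nonempty) (F : A → R)
    (X : Finset A) : ∃ g : A → R, ∀ x ∈ X, ∑ y ∈ T, g (x - y) = F x := by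
  classical
  obtain ⟨y₀, hy₀T, hy₀max⟩ := T.exists_max_image id hT
  induction X using Finset.induction_on_min with
  | empty => exact ⟨0, by simp⟩
  | insert x₀ X hx₀min ih =>
    obtain ⟨g, hg⟩ := ih
    refine ⟨Function.update g (x₀ - y₀) (F x₀ - ∑ y ∈ T.erase y₀, g (x₀ - y)), ?_⟩
    rintro x hx
    rcases Finset.mem_insert.1 hx with rfl | hxX
    · have hother : ∀ y ∈ T.erase y₀, x - y ≠ x - y₀ := fun y hy h ↦
        (Finset.mem_erase.1 hy).1 (sub_right_injective h)
      rw [← Finset.add_sum_erase _ _ hy₀T, Function.update_self,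
        Finset.sum_congr rfl fun y hy ↦ Function.update_of_ne (hother y hy) _ g]
      abel
    · have hfresh : ∀ y ∈ T, x - y ≠ x₀ - y₀ := fun y hy ↦
        (calc x₀ - y₀ < x - y₀ := sub_lt_sub_right (hx₀min x hxX) y₀
          _ ≤ x - y := sub_le_sub_left (hy₀max y hy) x).ne'
      rw [Finset.sum_congr rfl fun y hy ↦ Function.update_of_ne (hfresh y hy) _ _]
      exact hg x hxX

theorem exists_sum_sub_eq [Finite R] (T : Finset A) (hT : T.Nonempty) (F : A → R) :
    ∃ g : A → R, ∀ x, ∑ y ∈ T, g (x - y) = F x := by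
  classical
  refine exists_forall_of_forall_finset (fun x ↦ T.image (x - ·))
    (fun x g ↦ ∑ y ∈ T, g (x - y) = F x) (fun x g g' hgg' hg ↦ ?_)
    (exists_sum_sub_eq_on_finset T hT F)
  rw [← hg]
  exact Finset.sum_congr rfl fun y hy ↦ (hgg' _ (Finset.mem_image_of_mem _ hy)).symm

end

/-- deconvolution modulo `t` in `ℤ^b`: for any finite nonempty
`T ⊆ ℤ^b` and any `f`, there is `g : ℤ^b → {0,…,t-1}` with
`∑_{y ∈ T} g(x - y) ≡ f(x) (mod t)` for all `x`. -/
theorem deconvolution (t : ℕ) (ht : 1 ≤ t) (b : ℕ)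
    (T : Finset (Fin b → ℤ)) (hT : T.Nonempty)
    (f : (Fin b → ℤ) → ℤ) :
    ∃ g : (Fin b → ℤ) → ℤ,
      (∀ x, 0 ≤ g x ∧ g x ≤ (t : ℤ) - 1) ∧
      (∀ x, (∑ y ∈ T, g (x - y)) ≡ f x [ZMOD (t : ℤ)]) := by
  have : NeZero t := ⟨by omega⟩
  obtain ⟨g, hg⟩ := exists_sum_sub_eq (T.map toLex.toEmbedding) hT.map
    (fun x : Lex (Fin b → ℤ) ↦ (f (ofLex x) : ZMod t))
  refine ⟨fun z ↦ (g (toLex z)).val, fun x ↦ ⟨by positivity, ?_⟩, fun x ↦ ?_⟩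
  · have := (g (toLex x)).val_lt
    simp only
    omega
  · rw [← ZMod.intCast_eq_intCast_iff]
    convert hg (toLex x) using 1
    · simp [Finset.sum_map]
    · rfl
end

section
/- Let k ≥ 3 and T = [k] \ {i} ⊂ ℤ with 2 ≤ i ≤ k-1. Let ℓ = 2k(k-2). Then for any finite set C with |C| ≥ ℓ there exists a set X ⊂ ℤ × C such that: (a) X is a disjoint union of sets of the form (T + n) × {c} with n ∈ ℤ, c ∈ C; and (b) for every n ∈ ℤ, |({n} × C) ∩ X| ≡ 1 (mod k-1). -/
/-!
Let `T = [k] \ {i}`. Choose `g : ℤ → ZMod (k - 1)` with `∑ t ∈ T, g (n - t) = 1` for every `n`: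
such a `g` exists for any nonempty finite `T ⊆ ℤ`, because the leading and the trailing
coefficient of this recurrence are `1`, so it can be solved forwards and backwards from an
initial window. Now place `(g n).val ≤ k - 2` copies of `(T + n) × {c}`, coloured by
`(n mod k, copy index)`, which needs `k (k - 2)` colours. Two tiles of one colour have translates
`n ≡ n' (mod k)`, so either they coincide or `|n - n'| ≥ k` and they are disjoint since
`T ⊆ [1, k]`. The column `{n} × C` then contains `∑ t ∈ T, (g (n - t)).val ≡ 1` points.
-/

open Finset

section Recurrence

variable {G : Type*} [AddCommGroup G]

/-- The solution of `∑ t ∈ T, u (m + a - t) = c` for `m > 0` (with `a = min T`) that equals `w`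
on `m ≤ 0`. -/
def forwardRecurrence (T : Finset ℤ) (a : ℤ) (c : G) (w : ℤ → G) (m : ℤ) : G :=
  if 0 < m then c - ∑ t ∈ T, if a < t then forwardRecurrence T a c w (m + a - t) else 0
  else w m
termination_by m.toNat
decreasing_by omega

variable {T : Finset ℤ} {a : ℤ} {c : G} {w : ℤ → G} {m : ℤ}

theorem forwardRecurrence_of_nonpos (hm : m ≤ 0) : forwardRecurrence T a c w m = w m := by
  rw [forwardRecurrence, if_neg hm.not_gt]

theorem sum_forwardRecurrence (ha : a ∈ T) (hmin : ∀ t ∈ T, a ≤ t) (hm : 0 < m) :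
    ∑ t ∈ T, forwardRecurrence T a c w (m + a - t) = c := by
  have hfilter : T.filter (a < ·) = T.erase a := by
    ext t
    simp only [mem_filter, mem_erase]
    exact ⟨fun ⟨ht, hat⟩ ↦ ⟨hat.ne', ht⟩, fun ⟨hta, ht⟩ ↦ ⟨ht, (hmin t ht).lt_of_ne' hta⟩⟩
  rw [← add_sum_erase T _ ha, add_sub_cancel_right, forwardRecurrence, if_pos hm, ← sum_filter,
    hfilter, sub_add_cancel]

-- Backwards, the recurrence is the forward recurrence of the reflected set `-T`.
theorem exists_forall_sum_comp_sub_eq (hT : T.Nonempty) (c : G) :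
    ∃ g : ℤ → G, ∀ n, ∑ t ∈ T, g (n - t) = c := by
  set a := T.min' hT
  set b := T.max' hT
  set u : ℤ → G := forwardRecurrence T a c 0
  set v : ℤ → G := forwardRecurrence (T.image Neg.neg) (-b) c fun m ↦ u (a - b + 1 - m)
  have hvu : ∀ n, a - b + 1 ≤ n → v (a - b + 1 - n) = u n := fun n hn ↦
    (forwardRecurrence_of_nonpos (by omega)).trans (congrArg u (sub_sub_cancel _ _))
  refine ⟨fun n ↦ v (a - b + 1 - n), fun n ↦ ?_⟩
  obtain hn | hn := lt_or_ge a n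
  · calc ∑ t ∈ T, v (a - b + 1 - (n - t))
        = ∑ t ∈ T, u (n - a + a - t) := sum_congr rfl fun t ht ↦ by
          rw [hvu _ (by linarith [T.le_max' t ht]), sub_add_cancel]
      _ = c := sum_forwardRecurrence (T.min'_mem hT) (fun t ht ↦ T.min'_le t ht) (by omega)
  · calc ∑ t ∈ T, v (a - b + 1 - (n - t))
        = ∑ s ∈ T.image Neg.neg, v (a + 1 - n + -b - s) := by
          rw [sum_image fun _ _ _ _ h ↦ neg_injective h]
          exact sum_congr rfl fun t _ ↦ by ring_nf
      _ = c := sum_forwardRecurrence (mem_image_of_mem _ (T.max'_mem hT))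
          (by simpa using fun t ht ↦ T.le_max' t ht) (by omega)

end Recurrence

section Tiling

variable {α : Type*}

def tile (T : Finset ℤ) (n : ℤ) (c : α) : Set (ℤ × α) := {x | x.2 = c ∧ ∃ m ∈ T, x.1 = m + n}

def tiling (T : Finset ℤ) (N : ℤ → ℕ) (col : ℤ → ℕ → α) : Set (Set (ℤ × α)) :=
  {Q | ∃ n, ∃ j < N n, Q = tile T n (col n j)}

-- Two tiles of the same colour that share a point are the same tile.
def IsProperTileColoring (T : Finset ℤ) (N : ℤ → ℕ) (col : ℤ → ℕ → α) : Prop :=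
  ∀ n n' j j', j < N n → j' < N n' → col n j = col n' j' →
    ∀ m ∈ T, ∀ m' ∈ T, m + n = m' + n' → n = n' ∧ j = j'

variable {T : Finset ℤ} {N : ℤ → ℕ} {col : ℤ → ℕ → α}

theorem pairwiseDisjoint_tiling
    (hsep : IsProperTileColoring T N col) :
    (tiling T N col).PairwiseDisjoint id := by
  rintro _ ⟨n, j, hj, rfl⟩ _ ⟨n', j', hj', rfl⟩ hne
  refine Set.disjoint_left.2 fun x ⟨hx, m, hm, hxm⟩ ⟨hx', m', hm', hxm'⟩ ↦ hne ?_
  obtain ⟨rfl, rfl⟩ := hsep n n' j j' hj hj' (hx.symm.trans hx') m hm m' hm' (hxm.symm.trans hxm')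
  rfl

theorem ncard_inter_sUnion_tiling (C : Finset α) (hC : ∀ n j, j < N n → col n j ∈ C)
    (hsep : IsProperTileColoring T N col) (n₀ : ℤ) :
    ({x : ℤ × α | x.1 = n₀ ∧ x.2 ∈ C} ∩ ⋃₀ tiling T N col).ncard = ∑ t ∈ T, N (n₀ - t) := by
  classical
  set S := T.sigma fun t ↦ range (N (n₀ - t))
  set F : (_ : ℤ) × ℕ → ℤ × α := fun s ↦ (n₀, col (n₀ - s.1) s.2)
  have hS : {x : ℤ × α | x.1 = n₀ ∧ x.2 ∈ C} ∩ ⋃₀ tiling T N col = S.image F := by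
    ext ⟨x₁, x₂⟩
    simp only [Set.mem_inter_iff, Set.mem_ofPred_eq, Set.mem_sUnion, tiling, coe_image,
      Set.mem_image, mem_coe, S, F, mem_sigma, mem_range, Sigma.exists, Prod.mk.injEq]
    constructor
    · rintro ⟨⟨rfl, -⟩, _, ⟨n, j, hj, rfl⟩, rfl, m, hm, rfl : x₁ = m + n⟩
      exact ⟨m, j, by simpa using ⟨hm, hj⟩⟩
    · rintro ⟨m, j, ⟨hm, hj⟩, rfl, rfl⟩
      exact ⟨⟨rfl, hC _ _ hj⟩, _, ⟨_, j, hj, rfl⟩, rfl, m, hm, by simp⟩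
  have hF : Set.InjOn F S := by
    rintro ⟨m, j⟩ hmj ⟨m', j'⟩ hmj' hFF
    simp only [S, mem_coe, mem_sigma, mem_range] at hmj hmj'
    obtain ⟨hn, rfl⟩ := hsep _ _ j j' hmj.2 hmj'.2 (Prod.ext_iff.1 hFF).2 m hmj.1 m' hmj'.1 (by ring)
    obtain rfl : m = m' := by linarith
    rfl
  rw [hS, Set.ncard_coe_finset, card_image_of_injOn hF, card_sigma]
  simp only [card_range]

theorem exists_coloring (C : Finset α) (p q : ℕ) [NeZero p] [NeZero q] (h : p * q ≤ #C) :
    ∃ col : ℤ → ℕ → α, (∀ n j, col n j ∈ C) ∧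
      ∀ n n' j j', j < q → j' < q → col n j = col n' j' → (n : ZMod p) = n' ∧ j = j' := by
  obtain ⟨e⟩ := Function.Embedding.nonempty_of_card_le (α := ZMod p × Fin q) (β := C)
    (by simpa using h)
  refine ⟨fun n j ↦ e (n, Fin.ofNat q j), fun _ _ ↦ (e _).2, fun n n' j j' hj hj' h ↦ ?_⟩
  obtain ⟨hn, hjj⟩ := Prod.ext_iff.1 (e.injective (Subtype.ext h))
  refine ⟨hn, ?_⟩
  simpa [Fin.ext_iff, Nat.mod_eq_of_lt hj, Nat.mod_eq_of_lt hj'] using hjj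

theorem IsProperTileColoring.of_intCast_eq {p q : ℕ} (hT : ∀ m ∈ T, ∀ m' ∈ T, |m - m'| < p)
    (hN : ∀ n, N n ≤ q) (hcol : ∀ n n' j j', j < q → j' < q → col n j = col n' j' →
      (n : ZMod p) = n' ∧ j = j') :
    IsProperTileColoring T N col := by
  intro n n' j j' hj hj' h m hm m' hm' hmn
  obtain ⟨hnn, rfl⟩ := hcol n n' j j' (hj.trans_le (hN n)) (hj'.trans_le (hN n')) h
  have := Int.eq_zero_of_abs_lt_dvd ((ZMod.intCast_eq_intCast_iff_dvd_sub _ _ _).1 hnn)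
    (by rw [show n' - n = m - m' by omega]; exact hT m hm m' hm')
  exact ⟨by omega, rfl⟩

end Tiling

theorem specialDimensionSimple_general (k i : ℕ) (hk : 3 ≤ k) {α : Type*} (C : Finset α)
    (hC : 2 * k * (k - 2) ≤ C.card) :
    ∃ X : Set (ℤ × α),
      (∃ P : Set (Set (ℤ × α)),
        (∀ Q ∈ P, ∃ (n : ℤ) (c : α), c ∈ C ∧
          Q = {p : ℤ × α | p.2 = c ∧
                 ∃ m : ℤ, (1 ≤ m ∧ m ≤ (k : ℤ) ∧ m ≠ (i : ℤ)) ∧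
                   p.1 = m + n}) ∧
        P.PairwiseDisjoint id ∧ ⋃₀ P = X) ∧
      (∀ n : ℤ,
        ({p : ℤ × α | p.1 = n ∧ p.2 ∈ C} ∩ X).ncard % (k - 1) = 1 % (k - 1)) := by
  have : NeZero k := ⟨by omega⟩
  have : NeZero (k - 1) := ⟨by omega⟩
  have : NeZero (k - 2) := ⟨by omega⟩
  set T : Finset ℤ := (Icc 1 (k : ℤ)).erase i
  have hT : T.Nonempty := Nontrivial.erase_nonempty ⟨1, by simp; omega, k, by simp; omega, by omega⟩
  obtain ⟨g, hg⟩ := exists_forall_sum_comp_sub_eq hT (1 : ZMod (k - 1))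
  obtain ⟨col, hcolC, hcol⟩ := exists_coloring C k (k - 2)
    (le_trans (Nat.mul_le_mul_right _ (by omega)) hC)
  have hdiam : ∀ m ∈ T, ∀ m' ∈ T, |m - m'| < k := by
    simp only [T, mem_erase, mem_Icc, abs_sub_lt_iff]
    omega
  have hsep : IsProperTileColoring T (fun n ↦ (g n).val) col :=
    .of_intCast_eq hdiam (fun n ↦ Nat.le_sub_one_of_lt (g n).val_lt) hcol
  refine ⟨_, ⟨tiling T (fun n ↦ (g n).val) col, ?_, pairwiseDisjoint_tiling hsep, rfl⟩, fun n ↦ ?_⟩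
  · rintro _ ⟨n, j, -, rfl⟩
    refine ⟨n, col n j, hcolC n j, ?_⟩
    ext x
    simp only [tile, T, mem_erase, mem_Icc, Set.mem_ofPred_eq]
    exact and_congr_right fun _ ↦ exists_congr fun m ↦ by tauto
  · rw [ncard_inter_sUnion_tiling C (fun n j _ ↦ hcolC n j) hsep, ← ZMod.natCast_eq_natCast_iff']
    push_cast [ZMod.natCast_val, ZMod.cast_id']
    exact hg n

/-- for `T = [k] \ {i}` and any finite set `C` with
`|C| ≥ 2k(k-2)`, there is `X ⊆ ℤ × C` which is a disjoint union of sets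
`(T + n) × {c}` and meets each column `{n} × C` in `1 (mod k-1)` points. -/
theorem specialDimensionSimple (k i : ℕ) (hk : 3 ≤ k) (hi₁ : 2 ≤ i)
    (hi₂ : i ≤ k - 1) {α : Type*} (C : Finset α)
    (hC : 2 * k * (k - 2) ≤ C.card) :
    ∃ X : Set (ℤ × α),
      (∃ P : Set (Set (ℤ × α)),
        (∀ Q ∈ P, ∃ (n : ℤ) (c : α), c ∈ C ∧
          Q = {p : ℤ × α | p.2 = c ∧
                 ∃ m : ℤ, (1 ≤ m ∧ m ≤ (k : ℤ) ∧ m ≠ (i : ℤ)) ∧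
                   p.1 = m + n}) ∧
        P.PairwiseDisjoint id ∧ ⋃₀ P = X) ∧
      (∀ n : ℤ,
        ({p : ℤ × α | p.1 = n ∧ p.2 ∈ C} ∩ X).ncard % (k - 1) = 1 % (k - 1)) :=
  specialDimensionSimple_general k i hk C hC
end

section
/- With the setup of tiles T ⊊ G, T' = T + x ≠ T, C↓ = T' \ T, C↑ = T \ T', A = T ∪ T', and C_{i,d} ⊂ A^d as defined: let d ≥ 1 and let X ⊂ A^d be a hole (i.e. A^d \ X is T-tilable). Suppose C_{i,d} ⊂ X for some 0 ≤ i ≤ d. Then the set (X \ C_{i,d})^† := ((X \ C_{i,d}) × C↓) ∪ C_{d+1,d+1} is a hole in A^{d+1}. -/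
def Cset {G : Type*} (Cdown Cup : Set G) {d : ℕ} (io : Option (Fin d)) :
    Set (Fin d → G) :=
  {z | ∀ j : Fin d, z j ∈ if (some j = io) then Cup else Cdown}

def dagger {G : Type*} (Cdown Cup : Set G) {d : ℕ} (X : Set (Fin d → G)) :
    Set (Fin (d + 1) → G) :=
  {z | (Fin.init z ∈ X ∧ z (Fin.last d) ∈ Cdown) ∨
       ((∀ j : Fin d, z j.castSucc ∈ Cdown) ∧ z (Fin.last d) ∈ Cup)}

section Aux
namespace UseCsetAux

variable {G : Type*} [AddCommGroup G] {d : ℕ}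

def copyset (j : Fin d) (y : Fin d → G) (T : Set G) : Set (Fin d → G) :=
  {z | ∃ t ∈ T, z = Function.update y j (y j + t)}

lemma isCopy_copyset (T : Set G) (j : Fin d) (y : Fin d → G) : IsCopy T (copyset j y T) :=
  ⟨j, y, rfl⟩

lemma mem_copyset {T : Set G} {j : Fin d} {y z : Fin d → G} :
    z ∈ copyset j y T ↔ (∃ t ∈ T, z j = y j + t) ∧ ∀ k, k ≠ j → z k = y k := by
  constructor
  · rintro ⟨t, ht, rfl⟩
    exact ⟨⟨t, ht, by simp⟩, fun k hk => Function.update_of_ne hk _ _⟩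
  · rintro ⟨⟨t, ht, hj⟩, hk⟩
    refine ⟨t, ht, funext fun k => ?_⟩
    rcases eq_or_ne k j with rfl | h
    · simpa using hj
    · rw [Function.update_of_ne h]; exact hk k h

def vcopy (T : Set G) (a : Fin d → G) (s : G) : Set (Fin (d+1) → G) :=
  copyset (Fin.last d) (Fin.snoc a s) T

lemma mem_vcopy {T : Set G} {a : Fin d → G} {s : G} {z : Fin (d+1) → G} :
    z ∈ vcopy T a s ↔ (∃ t ∈ T, z (Fin.last d) = s + t) ∧ ∀ k : Fin d, z k.castSucc = a k := by
  rw [vcopy, mem_copyset]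
  simp only [Fin.snoc_last]
  constructor
  · rintro ⟨h1, h2⟩
    refine ⟨h1, fun k => ?_⟩
    rw [h2 k.castSucc (Fin.castSucc_lt_last k).ne]
    exact Fin.snoc_castSucc _ _ _
  · rintro ⟨h1, h2⟩
    refine ⟨h1, fun k hk => ?_⟩
    obtain ⟨k', rfl⟩ := Fin.exists_castSucc_eq.mpr hk
    rw [Fin.snoc_castSucc]; exact h2 k'

def hcopy (T : Set G) (i : Fin d) (a : Fin d → G) (s w : G) : Set (Fin (d+1) → G) :=
  copyset i.castSucc (Fin.snoc (Function.update a i s) w) T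

lemma mem_hcopy {T : Set G} {i : Fin d} {a : Fin d → G} {s w : G} {z : Fin (d+1) → G} :
    z ∈ hcopy T i a s w ↔ (∃ t ∈ T, z i.castSucc = s + t) ∧
      (∀ k : Fin d, k ≠ i → z k.castSucc = a k) ∧ z (Fin.last d) = w := by
  rw [hcopy, mem_copyset]
  constructor
  · rintro ⟨h1, h2⟩
    refine ⟨by simpa using h1, fun k hk => ?_, ?_⟩
    · have := h2 k.castSucc (fun h => hk (Fin.castSucc_injective _ h))
      rwa [Fin.snoc_castSucc, Function.update_of_ne hk] at this
    · have := h2 (Fin.last d) (Fin.castSucc_lt_last i).ne'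
      rwa [Fin.snoc_last] at this
  · rintro ⟨h1, h2, h3⟩
    refine ⟨by simpa using h1, fun k hk => ?_⟩
    induction k using Fin.lastCases with
    | last => rw [Fin.snoc_last]; exact h3
    | cast k =>
      have hki : k ≠ i := fun h => hk (congrArg Fin.castSucc h)
      rw [Fin.snoc_castSucc, Function.update_of_ne hki]
      exact h2 k hki

def pcopy (Sc : Set (Fin d → G)) (c : G) : Set (Fin (d+1) → G) :=
  {z | Fin.init z ∈ Sc ∧ z (Fin.last d) = c}

lemma mem_pcopy {Sc : Set (Fin d → G)} {c : G} {z : Fin (d+1) → G} :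
    z ∈ pcopy Sc c ↔ Fin.init z ∈ Sc ∧ z (Fin.last d) = c := Iff.rfl

lemma init_apply (z : Fin (d+1) → G) (k : Fin d) : Fin.init z k = z k.castSucc := rfl

lemma isCopy_pcopy {T : Set G} {Sc : Set (Fin d → G)} (h : IsCopy T Sc) (c : G) :
    IsCopy T (pcopy Sc c) := by
  obtain ⟨j, y, rfl⟩ := h
  refine ⟨j.castSucc, Fin.snoc y c, ?_⟩
  ext z
  show z ∈ pcopy (copyset j y T) c ↔ z ∈ copyset j.castSucc (Fin.snoc y c) T
  rw [mem_pcopy, mem_copyset, mem_copyset]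
  constructor
  · rintro ⟨⟨⟨t, ht, hj⟩, hk⟩, hlast⟩
    refine ⟨⟨t, ht, by simpa [init_apply, Fin.snoc_castSucc] using hj⟩, fun k hkk => ?_⟩
    induction k using Fin.lastCases with
    | last => rw [Fin.snoc_last]; exact hlast
    | cast k =>
      rw [Fin.snoc_castSucc]
      exact hk k (fun h => hkk (congrArg Fin.castSucc h))
  · rintro ⟨⟨t, ht, hj⟩, hk⟩
    refine ⟨⟨⟨t, ht, by simpa [init_apply, Fin.snoc_castSucc] using hj⟩, fun k hkk => ?_⟩, ?_⟩
    · have := hk k.castSucc (fun h => hkk (Fin.castSucc_injective _ h))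
      rwa [Fin.snoc_castSucc] at this
    · have := hk (Fin.last d) (Fin.castSucc_lt_last j).ne'
      rwa [Fin.snoc_last] at this

end UseCsetAux
end Aux

open UseCsetAux in
/-- if `X ⊆ A^d` is a hole (its complement in `A^d` is
`T`-tilable) and `C_{i,d} ⊆ X`, then `(X \ C_{i,d})†` is a hole in `A^{d+1}`. -/
theorem useCset {G : Type*} [AddCommGroup G] (T : Set G)
    (hTfin : T.Finite) (hTne : T.Nonempty) (hTprop : T ≠ Set.univ)
    (x : G) (hx : (fun t => t + x) '' T ≠ T)
    (A Cdown Cup : Set G)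
    (hA : A = T ∪ (fun t => t + x) '' T)
    (hCdown : Cdown = ((fun t => t + x) '' T) \ T)
    (hCup : Cup = T \ ((fun t => t + x) '' T))
    (d : ℕ) (hd : 1 ≤ d) (X : Set (Fin d → G))
    (hXsub : X ⊆ {z | ∀ j, z j ∈ A})
    (hXhole : Tilable T ({z : Fin d → G | ∀ j, z j ∈ A} \ X))
    (io : Option (Fin d)) (hio : Cset Cdown Cup io ⊆ X) :
    Tilable T
      ({z : Fin (d + 1) → G | ∀ j, z j ∈ A} \
        dagger Cdown Cup (X \ Cset Cdown Cup io)) := by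
  classical
  obtain ⟨PT, hPTc, hPTd, hPTu⟩ := hXhole
  set T' : Set G := (fun t => t + x) '' T with hT'def
  have hAm : ∀ w : G, w ∈ A ↔ (w ∈ T ∨ w ∈ T') := fun w => by rw [hA]; exact Set.mem_union _ _ _
  have hCdm : ∀ w : G, w ∈ Cdown ↔ (w ∈ T' ∧ w ∉ T) := fun w => by rw [hCdown]; exact Iff.rfl
  have hCum : ∀ w : G, w ∈ Cup ↔ (w ∈ T ∧ w ∉ T') := fun w => by rw [hCup]; exact Iff.rfl
  have hTA : ∀ w : G, w ∈ T → w ∈ A := fun w hw => (hAm w).mpr (Or.inl hw)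
  have hT'A : ∀ w : G, w ∈ T' → w ∈ A := fun w hw => (hAm w).mpr (Or.inr hw)
  have hCdA : ∀ w : G, w ∈ Cdown → w ∈ A := fun w hw => hT'A w ((hCdm w).mp hw).1
  have hCuT : ∀ w : G, w ∈ Cup → w ∈ T := fun w hw => ((hCum w).mp hw).1
  have hfib0 : ∀ w : G, (∃ t ∈ T, w = 0 + t) ↔ w ∈ T := by
    intro w
    constructor
    · rintro ⟨t, ht, rfl⟩; simpa using ht
    · intro h; exact ⟨w, h, (zero_add w).symm⟩
  have hfibx : ∀ w : G, (∃ t ∈ T, w = x + t) ↔ w ∈ T' := by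
    intro w
    rw [hT'def]
    simp only [Set.mem_image]
    constructor
    · rintro ⟨t, ht, rfl⟩; exact ⟨t, ht, add_comm t x⟩
    · rintro ⟨t, ht, rfl⟩; exact ⟨t, ht, add_comm t x⟩
  -- elements of `A \ Cup` are in `T'`; elements of `A \ Cdown` are in `T`
  have hACu : ∀ w : G, w ∈ A → w ∉ Cup → w ∈ T' := by
    intro w hw hw'
    rcases (hAm w).mp hw with h | h
    · by_contra h'
      exact hw' ((hCum w).mpr ⟨h, h'⟩)
    · exact h
  have hACd : ∀ w : G, w ∈ A → w ∉ Cdown → w ∈ T := by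
    intro w hw hw'
    rcases (hAm w).mp hw with h | h
    · exact h
    · by_contra h'
      exact hw' ((hCdm w).mpr ⟨h, h'⟩)
  have hScFacts : ∀ Sc ∈ PT, ∀ v ∈ Sc, (∀ j, v j ∈ A) ∧ v ∉ X := by
    intro Sc hSc v hv
    have : v ∈ ⋃₀ PT := ⟨Sc, hSc, hv⟩
    rw [hPTu] at this
    exact ⟨this.1, this.2⟩
  have hfindSc : ∀ v : Fin d → G, (∀ j, v j ∈ A) → v ∉ X → ∃ Sc ∈ PT, v ∈ Sc := by
    intro v hvA hvX
    have : v ∈ ⋃₀ PT := by rw [hPTu]; exact ⟨hvA, hvX⟩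
    obtain ⟨Sc, hSc, hv⟩ := this
    exact ⟨Sc, hSc, hv⟩
  have hYmem : ∀ z : Fin (d+1) → G,
      z ∈ ({z : Fin (d + 1) → G | ∀ j, z j ∈ A} \
        dagger Cdown Cup (X \ Cset Cdown Cup io)) ↔
      ((∀ j, z j ∈ A) ∧
       ¬((Fin.init z ∈ X ∧ Fin.init z ∉ Cset Cdown Cup io) ∧ z (Fin.last d) ∈ Cdown) ∧
       ¬((∀ j : Fin d, z j.castSucc ∈ Cdown) ∧ z (Fin.last d) ∈ Cup)) := by
    intro z
    simp only [Set.mem_diff, Set.mem_setOf_eq, dagger, not_or]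
    try tauto
  cases io with
  | none =>
    have hCs : ∀ a : Fin d → G,
        a ∈ Cset Cdown Cup (none : Option (Fin d)) ↔ ∀ j, a j ∈ Cdown := by
      intro a; simp [Cset]
    have hCsX : ∀ a : Fin d → G, (∀ j, a j ∈ Cdown) → a ∈ X :=
      fun a ha => hio ((hCs a).mpr ha)
    refine ⟨{S | ∃ Sc ∈ PT, ∃ c ∈ Cdown, S = pcopy Sc c}
        ∪ {S | ∃ a : Fin d → G, (∀ j, a j ∈ A) ∧ ¬ (∀ j, a j ∈ Cdown) ∧ S = vcopy T a 0}
        ∪ {S | ∃ a : Fin d → G, (∀ j, a j ∈ Cdown) ∧ S = vcopy T a x}, ?_, ?_, ?_⟩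
    · rintro S ((⟨Sc, hSc, c, hc, rfl⟩ | ⟨a, -, -, rfl⟩) | ⟨a, -, rfl⟩)
      · exact isCopy_pcopy (hPTc Sc hSc) c
      · exact isCopy_copyset T _ _
      · exact isCopy_copyset T _ _
    · rintro S1 ((⟨Sc, hSc, c, hc, rfl⟩ | ⟨a, haA, hanot, rfl⟩) | ⟨a, ha, rfl⟩)
          S2 ((⟨Sc', hSc', c', hc', rfl⟩ | ⟨a', haA', hanot', rfl⟩) | ⟨a', ha', rfl⟩) hne <;>
        refine Set.disjoint_left.mpr fun {z} hz1 hz2 => ?_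
      -- 1,1
      · obtain ⟨hi1, hl1⟩ := hz1
        obtain ⟨hi2, hl2⟩ := hz2
        obtain rfl : Sc = Sc' := by
          by_contra hSS
          exact Set.disjoint_left.mp (hPTd hSc hSc' hSS) hi1 hi2
        obtain rfl : c = c' := hl1.symm.trans hl2
        exact hne rfl
      -- 1,2
      · obtain ⟨hf, -⟩ := mem_vcopy.mp hz2
        have hT := (hfib0 _).mp hf
        rw [hz1.2] at hT
        exact ((hCdm c).mp hc).2 hT
      -- 1,3
      · obtain ⟨-, hcs⟩ := mem_vcopy.mp hz2
        have : Fin.init z = a' := funext fun k => hcs k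
        exact (hScFacts Sc hSc _ hz1.1).2 (this ▸ hCsX a' ha')
      -- 2,1
      · obtain ⟨hf, -⟩ := mem_vcopy.mp hz1
        have hT := (hfib0 _).mp hf
        rw [hz2.2] at hT
        exact ((hCdm c').mp hc').2 hT
      -- 2,2
      · obtain ⟨-, hcs⟩ := mem_vcopy.mp hz1
        obtain ⟨-, hcs'⟩ := mem_vcopy.mp hz2
        obtain rfl : a = a' := funext fun k => (hcs k).symm.trans (hcs' k)
        exact hne rfl
      -- 2,3
      · obtain ⟨-, hcs⟩ := mem_vcopy.mp hz1
        obtain ⟨-, hcs'⟩ := mem_vcopy.mp hz2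
        obtain rfl : a = a' := funext fun k => (hcs k).symm.trans (hcs' k)
        exact hanot ha'
      -- 3,1
      · obtain ⟨-, hcs⟩ := mem_vcopy.mp hz1
        have : Fin.init z = a := funext fun k => hcs k
        exact (hScFacts Sc' hSc' _ hz2.1).2 (this ▸ hCsX a ha)
      -- 3,2
      · obtain ⟨-, hcs⟩ := mem_vcopy.mp hz1
        obtain ⟨-, hcs'⟩ := mem_vcopy.mp hz2
        obtain rfl : a = a' := funext fun k => (hcs k).symm.trans (hcs' k)
        exact hanot' ha
      -- 3,3
      · obtain ⟨-, hcs⟩ := mem_vcopy.mp hz1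
        obtain ⟨-, hcs'⟩ := mem_vcopy.mp hz2
        obtain rfl : a = a' := funext fun k => (hcs k).symm.trans (hcs' k)
        exact hne rfl
    · ext z
      rw [hYmem]
      simp only [Set.mem_sUnion, Set.mem_union, Set.mem_setOf_eq]
      constructor
      · rintro ⟨S, ((⟨Sc, hSc, c, hc, rfl⟩ | ⟨a, haA, hanot, rfl⟩) | ⟨a, ha, rfl⟩), hzS⟩
        · obtain ⟨hzi, hzl⟩ := hzS
          obtain ⟨hzA', hznX⟩ := hScFacts Sc hSc _ hzi
          refine ⟨?_, ?_, ?_⟩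
          · intro j
            induction j using Fin.lastCases with
            | last => rw [hzl]; exact hCdA c hc
            | cast k => exact hzA' k
          · rintro ⟨⟨hX, -⟩, -⟩; exact hznX hX
          · rintro ⟨-, hCupl⟩
            rw [hzl] at hCupl
            exact ((hCum c).mp hCupl).2 ((hCdm c).mp hc).1
        · obtain ⟨hf, hcs⟩ := mem_vcopy.mp hzS
          have hlT := (hfib0 _).mp hf
          refine ⟨?_, ?_, ?_⟩
          · intro j
            induction j using Fin.lastCases with
            | last => exact hTA _ hlT
            | cast k => rw [hcs k]; exact haA k
          · rintro ⟨-, hCdl⟩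
            exact ((hCdm _).mp hCdl).2 hlT
          · rintro ⟨hall, -⟩
            exact hanot fun j => by rw [← hcs j]; exact hall j
        · obtain ⟨hf, hcs⟩ := mem_vcopy.mp hzS
          have hlT' := (hfibx _).mp hf
          refine ⟨?_, ?_, ?_⟩
          · intro j
            induction j using Fin.lastCases with
            | last => exact hT'A _ hlT'
            | cast k => rw [hcs k]; exact hCdA _ (ha k)
          · rintro ⟨⟨-, hnc⟩, -⟩
            exact hnc ((hCs _).mpr fun j => by rw [init_apply, hcs j]; exact ha j)
          · rintro ⟨-, hCupl⟩
            exact ((hCum _).mp hCupl).2 hlT'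
      · rintro ⟨hzA, hnd1, hnd2⟩
        by_cases hX : Fin.init z ∈ X
        · by_cases hC : ∀ j : Fin d, z j.castSucc ∈ Cdown
          · refine ⟨vcopy T (Fin.init z) x, Or.inr ⟨Fin.init z, hC, rfl⟩, ?_⟩
            refine mem_vcopy.mpr ⟨(hfibx _).mpr ?_, fun k => rfl⟩
            have hlnCup : z (Fin.last d) ∉ Cup := fun h => hnd2 ⟨hC, h⟩
            exact hACu _ (hzA _) hlnCup
          · by_cases hl : z (Fin.last d) ∈ Cdown
            · exact absurd ⟨⟨hX, fun h => hC ((hCs _).mp h)⟩, hl⟩ hnd1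
            · refine ⟨vcopy T (Fin.init z) 0,
                Or.inl (Or.inr ⟨Fin.init z, fun j => hzA j.castSucc, hC, rfl⟩), ?_⟩
              exact mem_vcopy.mpr ⟨(hfib0 _).mpr (hACd _ (hzA _) hl), fun k => rfl⟩
        · obtain ⟨Sc, hSc, hiSc⟩ := hfindSc (Fin.init z) (fun j => hzA j.castSucc) hX
          by_cases hl : z (Fin.last d) ∈ Cdown
          · exact ⟨pcopy Sc (z (Fin.last d)),
              Or.inl (Or.inl ⟨Sc, hSc, z (Fin.last d), hl, rfl⟩), hiSc, rfl⟩
          · have hC : ¬ ∀ j : Fin d, z j.castSucc ∈ Cdown := fun h => hX (hCsX _ h)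
            refine ⟨vcopy T (Fin.init z) 0,
              Or.inl (Or.inr ⟨Fin.init z, fun j => hzA j.castSucc, hC, rfl⟩), ?_⟩
            exact mem_vcopy.mpr ⟨(hfib0 _).mpr (hACd _ (hzA _) hl), fun k => rfl⟩
  | some i =>
    have hCs : ∀ a : Fin d → G,
        a ∈ Cset Cdown Cup (some i) ↔ (a i ∈ Cup ∧ ∀ j, j ≠ i → a j ∈ Cdown) := by
      intro a
      constructor
      · intro h
        refine ⟨by simpa using h i, fun j hj => by simpa [hj] using h j⟩
      · rintro ⟨h1, h2⟩ j
        rcases eq_or_ne j i with rfl | hj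
        · simpa using h1
        · simpa [hj] using h2 j hj
    refine ⟨{S | ∃ Sc ∈ PT, ∃ c ∈ Cdown, S = pcopy Sc c}
        ∪ {S | ∃ a : Fin d → G, (∀ j, a j ∈ A) ∧ (∃ j, j ≠ i ∧ a j ∉ Cdown) ∧ S = vcopy T a 0}
        ∪ {S | ∃ a : Fin d → G, (∀ j, j ≠ i → a j ∈ Cdown) ∧
            ∃ w, w ∈ Cup ∧ S = hcopy T i a 0 w}
        ∪ {S | ∃ a : Fin d → G, (∀ j, j ≠ i → a j ∈ Cdown) ∧
            ∃ w, (w ∈ T ∧ w ∈ T') ∧ S = hcopy T i a x w}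
        ∪ {S | ∃ a : Fin d → G, (∀ j, j ≠ i → a j ∈ Cdown) ∧ a i ∈ Cup ∧ S = vcopy T a x},
        ?_, ?_, ?_⟩
    · rintro S ((((⟨Sc, hSc, c, hc, rfl⟩ | ⟨a, -, -, rfl⟩) | ⟨a, -, w, -, rfl⟩) |
          ⟨a, -, w, -, rfl⟩) | ⟨a, -, -, rfl⟩)
      · exact isCopy_pcopy (hPTc Sc hSc) c
      · exact isCopy_copyset T _ _
      · exact isCopy_copyset T _ _
      · exact isCopy_copyset T _ _
      · exact isCopy_copyset T _ _
    · rintro S1 ((((⟨Sc, hSc, c, hc, rfl⟩ | ⟨a, haA, hex, rfl⟩) | ⟨a, ha, w, hw, rfl⟩) |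
            ⟨a, ha, w, hw, rfl⟩) | ⟨a, ha, hai, rfl⟩)
          S2 ((((⟨Sc', hSc', c', hc', rfl⟩ | ⟨a', haA', hex', rfl⟩) | ⟨a', ha', w', hw', rfl⟩) |
            ⟨a', ha', w', hw', rfl⟩) | ⟨a', ha', hai', rfl⟩) hne <;>
        refine Set.disjoint_left.mpr fun {z} hz1 hz2 => ?_
      -- (1,1)
      · obtain rfl : Sc = Sc' := by
          by_contra hSS
          exact Set.disjoint_left.mp (hPTd hSc hSc' hSS) hz1.1 hz2.1
        obtain rfl : c = c' := hz1.2.symm.trans hz2.2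
        exact hne rfl
      -- (1,2)
      · obtain ⟨hf, -⟩ := mem_vcopy.mp hz2
        have hT := (hfib0 _).mp hf
        rw [hz1.2] at hT
        exact ((hCdm c).mp hc).2 hT
      -- (1,3)
      · obtain ⟨-, -, hlast2⟩ := mem_hcopy.mp hz2
        have hcC : c ∈ Cup := by rw [← hz1.2, hlast2]; exact hw'
        exact ((hCdm c).mp hc).2 ((hCum c).mp hcC).1
      -- (1,4)
      · obtain ⟨-, -, hlast2⟩ := mem_hcopy.mp hz2
        have hcT : c ∈ T := by rw [← hz1.2, hlast2]; exact hw'.1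
        exact ((hCdm c).mp hc).2 hcT
      -- (1,5)
      · obtain ⟨-, hcs2⟩ := mem_vcopy.mp hz2
        have hXin : Fin.init z ∈ X := hio ((hCs _).mpr
          ⟨by rw [init_apply, hcs2 i]; exact hai',
           fun j hj => by rw [init_apply, hcs2 j]; exact ha' j hj⟩)
        exact (hScFacts Sc hSc _ hz1.1).2 hXin
      -- (2,1)
      · obtain ⟨hf, -⟩ := mem_vcopy.mp hz1
        have hT := (hfib0 _).mp hf
        rw [hz2.2] at hT
        exact ((hCdm c').mp hc').2 hT
      -- (2,2)
      · obtain ⟨-, hcs1⟩ := mem_vcopy.mp hz1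
        obtain ⟨-, hcs2⟩ := mem_vcopy.mp hz2
        obtain rfl : a = a' := funext fun k => (hcs1 k).symm.trans (hcs2 k)
        exact hne rfl
      -- (2,3)
      · obtain ⟨-, hcs1⟩ := mem_vcopy.mp hz1
        obtain ⟨-, hoff2, -⟩ := mem_hcopy.mp hz2
        obtain ⟨j, hji, hjn⟩ := hex
        exact hjn (by rw [← hcs1 j, hoff2 j hji]; exact ha' j hji)
      -- (2,4)
      · obtain ⟨-, hcs1⟩ := mem_vcopy.mp hz1
        obtain ⟨-, hoff2, -⟩ := mem_hcopy.mp hz2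
        obtain ⟨j, hji, hjn⟩ := hex
        exact hjn (by rw [← hcs1 j, hoff2 j hji]; exact ha' j hji)
      -- (2,5)
      · obtain ⟨-, hcs1⟩ := mem_vcopy.mp hz1
        obtain ⟨-, hcs2⟩ := mem_vcopy.mp hz2
        obtain ⟨j, hji, hjn⟩ := hex
        exact hjn (by rw [← hcs1 j, hcs2 j]; exact ha' j hji)
      -- (3,1)
      · obtain ⟨-, -, hlast1⟩ := mem_hcopy.mp hz1
        have hCupz : z (Fin.last d) ∈ Cup := by rw [hlast1]; exact hw
        have hCdz : z (Fin.last d) ∈ Cdown := by rw [hz2.2]; exact hc'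
        exact ((hCdm _).mp hCdz).2 ((hCum _).mp hCupz).1
      -- (3,2)
      · obtain ⟨-, hoff1, -⟩ := mem_hcopy.mp hz1
        obtain ⟨-, hcs2⟩ := mem_vcopy.mp hz2
        obtain ⟨j, hji, hjn⟩ := hex'
        exact hjn (by rw [← hcs2 j, hoff1 j hji]; exact ha j hji)
      -- (3,3)
      · obtain ⟨-, hoff1, hlast1⟩ := mem_hcopy.mp hz1
        obtain ⟨-, hoff2, hlast2⟩ := mem_hcopy.mp hz2
        have hww : w = w' := hlast1.symm.trans hlast2
        have hupd : Function.update a i (0:G) = Function.update a' i 0 := by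
          funext k
          rcases eq_or_ne k i with rfl | hk
          · simp
          · rw [Function.update_of_ne hk, Function.update_of_ne hk, ← hoff1 k hk]
            exact hoff2 k hk
        exact hne (by unfold hcopy; rw [hww, hupd])
      -- (3,4)
      · obtain ⟨-, -, hlast1⟩ := mem_hcopy.mp hz1
        obtain ⟨-, -, hlast2⟩ := mem_hcopy.mp hz2
        have hCupz : z (Fin.last d) ∈ Cup := by rw [hlast1]; exact hw
        have hT'z : z (Fin.last d) ∈ T' := by rw [hlast2]; exact hw'.2
        exact ((hCum _).mp hCupz).2 hT'z
      -- (3,5)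
      · obtain ⟨-, -, hlast1⟩ := mem_hcopy.mp hz1
        obtain ⟨hf2, -⟩ := mem_vcopy.mp hz2
        have hCupz : z (Fin.last d) ∈ Cup := by rw [hlast1]; exact hw
        exact ((hCum _).mp hCupz).2 ((hfibx _).mp hf2)
      -- (4,1)
      · obtain ⟨-, -, hlast1⟩ := mem_hcopy.mp hz1
        have hCdz : z (Fin.last d) ∈ Cdown := by rw [hz2.2]; exact hc'
        have hTz : z (Fin.last d) ∈ T := by rw [hlast1]; exact hw.1
        exact ((hCdm _).mp hCdz).2 hTz
      -- (4,2)
      · obtain ⟨-, hoff1, -⟩ := mem_hcopy.mp hz1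
        obtain ⟨-, hcs2⟩ := mem_vcopy.mp hz2
        obtain ⟨j, hji, hjn⟩ := hex'
        exact hjn (by rw [← hcs2 j, hoff1 j hji]; exact ha j hji)
      -- (4,3)
      · obtain ⟨-, -, hlast1⟩ := mem_hcopy.mp hz1
        obtain ⟨-, -, hlast2⟩ := mem_hcopy.mp hz2
        have hCupz : z (Fin.last d) ∈ Cup := by rw [hlast2]; exact hw'
        have hT'z : z (Fin.last d) ∈ T' := by rw [hlast1]; exact hw.2
        exact ((hCum _).mp hCupz).2 hT'z
      -- (4,4)
      · obtain ⟨-, hoff1, hlast1⟩ := mem_hcopy.mp hz1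
        obtain ⟨-, hoff2, hlast2⟩ := mem_hcopy.mp hz2
        have hww : w = w' := hlast1.symm.trans hlast2
        have hupd : Function.update a i x = Function.update a' i x := by
          funext k
          rcases eq_or_ne k i with rfl | hk
          · simp
          · rw [Function.update_of_ne hk, Function.update_of_ne hk, ← hoff1 k hk]
            exact hoff2 k hk
        exact hne (by unfold hcopy; rw [hww, hupd])
      -- (4,5)
      · obtain ⟨hfi1, -, -⟩ := mem_hcopy.mp hz1
        obtain ⟨-, hcs2⟩ := mem_vcopy.mp hz2
        have hCupu : z i.castSucc ∈ Cup := by rw [hcs2 i]; exact hai'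
        exact ((hCum _).mp hCupu).2 ((hfibx _).mp hfi1)
      -- (5,1)
      · obtain ⟨-, hcs1⟩ := mem_vcopy.mp hz1
        have hXin : Fin.init z ∈ X := hio ((hCs _).mpr
          ⟨by rw [init_apply, hcs1 i]; exact hai,
           fun j hj => by rw [init_apply, hcs1 j]; exact ha j hj⟩)
        exact (hScFacts Sc' hSc' _ hz2.1).2 hXin
      -- (5,2)
      · obtain ⟨-, hcs1⟩ := mem_vcopy.mp hz1
        obtain ⟨-, hcs2⟩ := mem_vcopy.mp hz2
        obtain ⟨j, hji, hjn⟩ := hex'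
        exact hjn (by rw [← hcs2 j, hcs1 j]; exact ha j hji)
      -- (5,3)
      · obtain ⟨hf1, -⟩ := mem_vcopy.mp hz1
        obtain ⟨-, -, hlast2⟩ := mem_hcopy.mp hz2
        have hCupz : z (Fin.last d) ∈ Cup := by rw [hlast2]; exact hw'
        exact ((hCum _).mp hCupz).2 ((hfibx _).mp hf1)
      -- (5,4)
      · obtain ⟨-, hcs1⟩ := mem_vcopy.mp hz1
        obtain ⟨hfi2, -, -⟩ := mem_hcopy.mp hz2
        have hCupu : z i.castSucc ∈ Cup := by rw [hcs1 i]; exact hai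
        exact ((hCum _).mp hCupu).2 ((hfibx _).mp hfi2)
      -- (5,5)
      · obtain ⟨-, hcs1⟩ := mem_vcopy.mp hz1
        obtain ⟨-, hcs2⟩ := mem_vcopy.mp hz2
        obtain rfl : a = a' := funext fun k => (hcs1 k).symm.trans (hcs2 k)
        exact hne rfl
    · ext z
      rw [hYmem]
      simp only [Set.mem_sUnion, Set.mem_union, Set.mem_setOf_eq]
      constructor
      · rintro ⟨S, ((((⟨Sc, hSc, c, hc, rfl⟩ | ⟨a, haA, hex, rfl⟩) | ⟨a, ha, w, hw, rfl⟩) |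
            ⟨a, ha, w, hw, rfl⟩) | ⟨a, ha, hai, rfl⟩), hzS⟩
        · obtain ⟨hzi, hzl⟩ := hzS
          obtain ⟨hzA', hznX⟩ := hScFacts Sc hSc _ hzi
          refine ⟨?_, ?_, ?_⟩
          · intro j
            induction j using Fin.lastCases with
            | last => rw [hzl]; exact hCdA c hc
            | cast k => exact hzA' k
          · rintro ⟨⟨hX, -⟩, -⟩; exact hznX hX
          · rintro ⟨-, hCupl⟩
            rw [hzl] at hCupl
            exact ((hCum c).mp hCupl).2 ((hCdm c).mp hc).1
        · obtain ⟨hf, hcs⟩ := mem_vcopy.mp hzS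
          have hlT := (hfib0 _).mp hf
          refine ⟨?_, ?_, ?_⟩
          · intro j
            induction j using Fin.lastCases with
            | last => exact hTA _ hlT
            | cast k => rw [hcs k]; exact haA k
          · rintro ⟨-, hCdl⟩
            exact ((hCdm _).mp hCdl).2 hlT
          · rintro ⟨hall, -⟩
            obtain ⟨j, hji, hjn⟩ := hex
            exact hjn (by rw [← hcs j]; exact hall j)
        · obtain ⟨hfi, hoff, hlast⟩ := mem_hcopy.mp hzS
          have hiT := (hfib0 _).mp hfi
          refine ⟨?_, ?_, ?_⟩
          · intro j
            induction j using Fin.lastCases with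
            | last => rw [hlast]; exact hTA _ (hCuT _ hw)
            | cast k =>
              rcases eq_or_ne k i with rfl | hk
              · exact hTA _ hiT
              · rw [hoff k hk]; exact hCdA _ (ha k hk)
          · rintro ⟨-, hCdl⟩
            rw [hlast] at hCdl
            exact ((hCdm _).mp hCdl).2 (hCuT _ hw)
          · rintro ⟨hall, -⟩
            exact ((hCdm _).mp (hall i)).2 hiT
        · obtain ⟨hfi, hoff, hlast⟩ := mem_hcopy.mp hzS
          have hiT' := (hfibx _).mp hfi
          refine ⟨?_, ?_, ?_⟩
          · intro j
            induction j using Fin.lastCases with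
            | last => rw [hlast]; exact hTA _ hw.1
            | cast k =>
              rcases eq_or_ne k i with rfl | hk
              · exact hT'A _ hiT'
              · rw [hoff k hk]; exact hCdA _ (ha k hk)
          · rintro ⟨-, hCdl⟩
            rw [hlast] at hCdl
            exact ((hCdm _).mp hCdl).2 hw.1
          · rintro ⟨-, hCul⟩
            rw [hlast] at hCul
            exact ((hCum _).mp hCul).2 hw.2
        · obtain ⟨hf, hcs⟩ := mem_vcopy.mp hzS
          have hlT' := (hfibx _).mp hf
          refine ⟨?_, ?_, ?_⟩
          · intro j
            induction j using Fin.lastCases with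
            | last => exact hT'A _ hlT'
            | cast k =>
              rcases eq_or_ne k i with rfl | hk
              · rw [hcs k]; exact hTA _ (hCuT _ hai)
              · rw [hcs k]; exact hCdA _ (ha k hk)
          · rintro ⟨⟨-, hnc⟩, -⟩
            refine hnc ((hCs _).mpr ⟨?_, fun j hj => ?_⟩)
            · rw [init_apply, hcs i]; exact hai
            · rw [init_apply, hcs j]; exact ha j hj
          · rintro ⟨hall, -⟩
            have := hall i
            rw [hcs i] at this
            exact ((hCdm _).mp this).2 (hCuT _ hai)
      · rintro ⟨hzA, hnd1, hnd2⟩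
        by_cases hslab : ∀ j, j ≠ i → z j.castSucc ∈ Cdown
        · by_cases hu : z i.castSucc ∈ Cup
          · by_cases hlT' : z (Fin.last d) ∈ T'
            · refine ⟨vcopy T (Fin.init z) x, Or.inr ⟨Fin.init z, hslab, hu, rfl⟩, ?_⟩
              exact mem_vcopy.mpr ⟨(hfibx _).mpr hlT', fun k => rfl⟩
            · have hlCup : z (Fin.last d) ∈ Cup := by
                rcases (hAm _).mp (hzA (Fin.last d)) with h | h
                · exact (hCum _).mpr ⟨h, hlT'⟩
                · exact absurd h hlT'
              refine ⟨hcopy T i (Fin.init z) 0 (z (Fin.last d)),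
                Or.inl (Or.inl (Or.inr ⟨Fin.init z, hslab, z (Fin.last d), hlCup, rfl⟩)), ?_⟩
              exact mem_hcopy.mpr ⟨(hfib0 _).mpr (hCuT _ hu), fun k hk => rfl, rfl⟩
          · by_cases hl : z (Fin.last d) ∈ Cdown
            · have hinX : Fin.init z ∉ X := fun hX =>
                hnd1 ⟨⟨hX, fun hc => hu ((hCs _).mp hc).1⟩, hl⟩
              obtain ⟨Sc, hSc, hiSc⟩ := hfindSc (Fin.init z) (fun j => hzA j.castSucc) hinX
              exact ⟨pcopy Sc (z (Fin.last d)),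
                Or.inl (Or.inl (Or.inl (Or.inl ⟨Sc, hSc, z (Fin.last d), hl, rfl⟩))), hiSc, rfl⟩
            · have hlT : z (Fin.last d) ∈ T := hACd _ (hzA _) hl
              by_cases hud : z i.castSucc ∈ Cdown
              · have hC : ∀ j : Fin d, z j.castSucc ∈ Cdown := fun j => by
                  rcases eq_or_ne j i with rfl | hj
                  · exact hud
                  · exact hslab j hj
                have hlT' : z (Fin.last d) ∈ T' :=
                  hACu _ (hzA _) (fun h => hnd2 ⟨hC, h⟩)
                refine ⟨hcopy T i (Fin.init z) x (z (Fin.last d)),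
                  Or.inl (Or.inr ⟨Fin.init z, hslab, z (Fin.last d), ⟨hlT, hlT'⟩, rfl⟩), ?_⟩
                exact mem_hcopy.mpr ⟨(hfibx _).mpr ((hCdm _).mp hud).1, fun k hk => rfl, rfl⟩
              · have huT : z i.castSucc ∈ T := hACd _ (hzA _) hud
                have huT' : z i.castSucc ∈ T' := hACu _ (hzA _) hu
                by_cases hlCup : z (Fin.last d) ∈ Cup
                · refine ⟨hcopy T i (Fin.init z) 0 (z (Fin.last d)),
                    Or.inl (Or.inl (Or.inr ⟨Fin.init z, hslab, z (Fin.last d), hlCup, rfl⟩)), ?_⟩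
                  exact mem_hcopy.mpr ⟨(hfib0 _).mpr huT, fun k hk => rfl, rfl⟩
                · have hlT'2 : z (Fin.last d) ∈ T' := hACu _ (hzA _) hlCup
                  refine ⟨hcopy T i (Fin.init z) x (z (Fin.last d)),
                    Or.inl (Or.inr ⟨Fin.init z, hslab, z (Fin.last d), ⟨hlT, hlT'2⟩, rfl⟩), ?_⟩
                  exact mem_hcopy.mpr ⟨(hfibx _).mpr huT', fun k hk => rfl, rfl⟩
        · push_neg at hslab
          obtain ⟨j0, hj0i, hj0⟩ := hslab
          by_cases hl : z (Fin.last d) ∈ Cdown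
          · have hinX : Fin.init z ∉ X := fun hX =>
              hnd1 ⟨⟨hX, fun hc => hj0 (((hCs _).mp hc).2 j0 hj0i)⟩, hl⟩
            obtain ⟨Sc, hSc, hiSc⟩ := hfindSc (Fin.init z) (fun j => hzA j.castSucc) hinX
            exact ⟨pcopy Sc (z (Fin.last d)),
              Or.inl (Or.inl (Or.inl (Or.inl ⟨Sc, hSc, z (Fin.last d), hl, rfl⟩))), hiSc, rfl⟩
          · refine ⟨vcopy T (Fin.init z) 0,
              Or.inl (Or.inl (Or.inl (Or.inr
                ⟨Fin.init z, fun j => hzA j.castSucc, ⟨j0, hj0i, hj0⟩, rfl⟩))), ?_⟩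
            exact mem_vcopy.mpr ⟨(hfib0 _).mpr (hACd _ (hzA _) hl), fun k => rfl⟩
end

section
/- Let t, b ≥ 1 be integers and T a finite non-empty subset of ℤ^b. Let S be a set and F a family of at least (t-1)|T|² pairwise disjoint subsets of S. Then there exists X ⊂ ℤ^b × S satisfying: (a) X is a disjoint union of sets of the form (T + x) × A with x ∈ ℤ^b and A ∈ F; (b) for each x ∈ ℤ^b there exists m ≡ 1 (mod t) such that {y ∈ S : (x, y) ∈ X} is a union of exactly m distinct members of F. -/
/-!
Choose for each `x ∈ ℤ^b` a set `c x` of `ν x ≤ t - 1` members of `F` and let `X` be the union of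
the tiles `(T + x) × A`, `A ∈ c x`. The tiles are pairwise disjoint as soon as `c x` and `c y` are
disjoint whenever `T + x` and `T + y` meet, i.e. `x - y ∈ T - T`; since every `x` has fewer than
`|T|²` such neighbours, a greedy choice along an enumeration of `ℤ^b` succeeds with `(t - 1)|T|²`
members of `F`. The slice of `X` over `z` is the disjoint union of the `c (z - τ)`, `τ ∈ T`, so it
remains to find `ν` with `∑ τ ∈ T, ν (z - τ) ≡ 1 (mod t)` for all `z`. A homomorphism `ℤ^b → ℤ`
injective on `T` (a base expansion) turns this into a convolution equation
`∑ Δ ∈ D, μ (w - Δ) = 1` on `ℤ`, solved by recursion upwards from `min D` on `[min D, ∞)` and,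
after reflecting, downwards from `max D` on the complement.
-/

open Finset
open scoped Pointwise

theorem eq_zero_of_sum_mul_pow_eq_zero {K : ℤ} :
    ∀ {b : ℕ} {d : Fin b → ℤ}, (∀ i, |d i| < K) → ∑ i, d i * K ^ (i : ℕ) = 0 → d = 0
  | 0, d, _, _ => Subsingleton.elim d 0
  | b + 1, d, hd, hsum => by
    set S := ∑ i : Fin b, d i.succ * K ^ (i : ℕ)
    have hsplit : d 0 + K * S = 0 := by
      rw [Fin.sum_univ_succ] at hsum
      simpa [S, pow_succ, mul_sum, mul_comm, mul_left_comm, mul_assoc] using hsum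
    have h0 : d 0 = 0 := Int.eq_zero_of_abs_lt_dvd ⟨-S, by linarith⟩ (hd 0)
    have hK : 0 < K := (abs_nonneg _).trans_lt (hd 0)
    have hS : S = 0 := by
      rw [h0, zero_add] at hsplit
      exact (mul_eq_zero.mp hsplit).resolve_left hK.ne'
    have htail : (fun i : Fin b => d i.succ) = 0 :=
      eq_zero_of_sum_mul_pow_eq_zero (fun i => hd i.succ) hS
    funext i
    exact Fin.cases h0 (fun j => congrFun htail j) i

theorem exists_addMonoidHom_injOn {b : ℕ} (T : Finset (Fin b → ℤ)) :
    ∃ φ : (Fin b → ℤ) →+ ℤ, Set.InjOn φ T := by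
  set C := ∑ x ∈ T, ∑ i, |x i|
  have hC : ∀ x ∈ T, ∀ i, |x i| ≤ C := fun x hx i =>
    (single_le_sum (fun j _ => abs_nonneg (x j)) (mem_univ i)).trans <|
      single_le_sum (f := fun x : Fin b → ℤ => ∑ i, |x i|)
        (fun y _ => sum_nonneg fun j _ => abs_nonneg (y j)) hx
  refine ⟨AddMonoidHom.mk' (fun x => x ⬝ᵥ fun i => (2 * C + 1) ^ (i : ℕ))
    fun x y => add_dotProduct x y _, fun x hx y hy hxy => ?_⟩
  have hdigits : ∀ i, |(x - y) i| < 2 * C + 1 := fun i => by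
    have := abs_sub (x i) (y i)
    have := hC x hx i
    have := hC y hy i
    rw [Pi.sub_apply]
    linarith
  have hzero : ∑ i, (x - y) i * (2 * C + 1) ^ (i : ℕ) = 0 := by
    rw [← dotProduct, sub_dotProduct]
    exact sub_eq_zero.mpr hxy
  exact sub_eq_zero.mp (eq_zero_of_sum_mul_pow_eq_zero hdigits hzero)

section Convolution

variable {M : Type*} [AddCommGroup M] (D : Finset ℤ) (a : ℤ) (c : M)

noncomputable def halfLineSolution (l : ℤ) : M :=
  if l < 0 then 0
  else c - ∑ Δ ∈ (D.filter fun Δ => a < Δ ∧ Δ ≤ l + a).attach, halfLineSolution (l + a - Δ)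
termination_by l.toNat
decreasing_by have := (mem_filter.mp Δ.2).2; omega

theorem halfLineSolution_of_neg {l : ℤ} (hl : l < 0) : halfLineSolution D a c l = 0 := by
  rw [halfLineSolution, if_pos hl]

theorem halfLineSolution_of_nonneg {l : ℤ} (hl : 0 ≤ l) : halfLineSolution D a c l =
    c - ∑ Δ ∈ D.filter (fun Δ => a < Δ ∧ Δ ≤ l + a), halfLineSolution D a c (l + a - Δ) := by
  rw [halfLineSolution, if_neg (not_lt.mpr hl),
    sum_attach _ fun Δ => halfLineSolution D a c (l + a - Δ)]

theorem sum_halfLineSolution (ha : a ∈ D) (hD : ∀ Δ ∈ D, a ≤ Δ) (w : ℤ) :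
    ∑ Δ ∈ D, halfLineSolution D a c (w - Δ) = if a ≤ w then c else 0 := by
  split_ifs with hw
  · have hrest : ∑ Δ ∈ D.filter (fun Δ => a < Δ ∧ Δ ≤ w), halfLineSolution D a c (w - Δ) =
        ∑ Δ ∈ D.erase a, halfLineSolution D a c (w - Δ) := by
      refine sum_subset (fun Δ hΔ => ?_) fun Δ hΔ hΔw => halfLineSolution_of_neg D a c ?_
      · exact mem_erase.mpr ⟨(mem_filter.mp hΔ).2.1.ne', (mem_filter.mp hΔ).1⟩
      · have := hD Δ (mem_of_mem_erase hΔ)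
        have := ne_of_mem_erase hΔ
        simp only [mem_filter, not_and, not_le] at hΔw
        have := hΔw (mem_of_mem_erase hΔ) (by omega)
        omega
    rw [← add_sum_erase D _ ha, ← hrest, halfLineSolution_of_nonneg D a c (sub_nonneg.mpr hw),
      sub_add_cancel]
    abel
  · exact sum_eq_zero fun Δ hΔ => halfLineSolution_of_neg D a c (by linarith [hD Δ hΔ])

theorem exists_forall_sum_sub_eq (hD : D.Nonempty) :
    ∃ μ : ℤ → M, ∀ w, ∑ Δ ∈ D, μ (w - Δ) = c := by
  set a := D.min' hD
  set R := D.max' hD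
  have hR : -R ∈ D.image Neg.neg := mem_image_of_mem _ (D.max'_mem hD)
  have hRle : ∀ Δ ∈ D.image Neg.neg, -R ≤ Δ := by
    simp only [mem_image, forall_exists_index, and_imp, forall_apply_eq_imp_iff₂, neg_le_neg_iff]
    exact fun Δ hΔ => D.le_max' Δ hΔ
  -- the two half-line solutions are supported on `[a, ∞)` and `(-∞, a - 1]` respectively
  refine ⟨fun l => halfLineSolution D a c l +
    halfLineSolution (D.image Neg.neg) (-R) c (a - 1 - R - l), fun w => ?_⟩
  have hreflect : ∑ Δ ∈ D, halfLineSolution (D.image Neg.neg) (-R) c (a - 1 - R - (w - Δ)) =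
      ∑ Δ ∈ D.image Neg.neg, halfLineSolution (D.image Neg.neg) (-R) c (a - 1 - R - w - Δ) := by
    rw [sum_image fun x _ y _ h => neg_inj.mp h]
    exact sum_congr rfl fun Δ _ => by congr 1; ring
  rw [sum_add_distrib, hreflect, sum_halfLineSolution _ _ c hR hRle,
    sum_halfLineSolution D a c (D.min'_mem hD) fun Δ hΔ => D.min'_le Δ hΔ]
  split_ifs <;> first | omega | simp

theorem exists_forall_sum_sub_eq_of_injOn {G : Type*} [AddCommGroup G] {T : Finset G}
    (hT : T.Nonempty) {φ : G →+ ℤ} (hφ : Set.InjOn φ T) :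
    ∃ ν : G → M, ∀ z, ∑ τ ∈ T, ν (z - τ) = c := by
  obtain ⟨μ, hμ⟩ := exists_forall_sum_sub_eq (T.image φ) c (hT.image φ)
  refine ⟨fun x => μ (φ x), fun z => ?_⟩
  simp only [map_sub]
  rw [← hμ (φ z), sum_image hφ]

end Convolution

section Greedy

variable {V β : Type*} [DecidableEq β] (e : V → ℕ) (N : V → Finset V) (F : Finset β) (ν : V → ℕ)

noncomputable def greedyFinsets (v : V) : Finset β :=
  Classical.epsilon fun s => s ⊆ F \ ((N v).filter (e · < e v)).attach.biUnion
    (fun w => greedyFinsets w.1) ∧ #s = ν v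
termination_by e v
decreasing_by exact (mem_filter.mp w.2).2

theorem greedyFinsets_spec {d k : ℕ} (hN : ∀ v, #(N v) ≤ d) (hν : ∀ v, ν v ≤ k)
    (hF : (d + 1) * k ≤ #F) (v : V) :
    greedyFinsets e N F ν v ⊆ F \ ((N v).filter (e · < e v)).biUnion (greedyFinsets e N F ν) ∧
      #(greedyFinsets e N F ν v) = ν v := by
  induction hv : e v using Nat.strong_induction_on generalizing v with
  | _ n ih =>
    subst hv
    set B := ((N v).filter (e · < e v)).biUnion (greedyFinsets e N F ν)
    have hB : #B ≤ d * k := calc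
      #B ≤ ∑ w ∈ (N v).filter (e · < e v), #(greedyFinsets e N F ν w) := card_biUnion_le
      _ ≤ ∑ _w ∈ (N v).filter (e · < e v), k := sum_le_sum fun w hw => by
          rw [(ih _ (mem_filter.mp hw).2 w rfl).2]; exact hν w
      _ ≤ d * k := by
          rw [sum_const, smul_eq_mul]
          exact Nat.mul_le_mul_right _ ((card_filter_le _ _).trans (hN v))
    have hpool : ν v ≤ #(F \ B) := by
      have := le_card_sdiff B F
      have := hν v
      have : (d + 1) * k = d * k + k := by ring
      omega
    rw [greedyFinsets, attach_biUnion]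
    exact Classical.epsilon_spec (exists_subset_card_eq hpool)

theorem exists_disjoint_finsets_of_card_le [Countable V] {d k : ℕ}
    (hsymm : ∀ v, ∀ w ∈ N v, v ∈ N w) (hirrefl : ∀ v, v ∉ N v)
    (hN : ∀ v, #(N v) ≤ d) (hν : ∀ v, ν v ≤ k) (hF : (d + 1) * k ≤ #F) :
    ∃ c : V → Finset β, (∀ v, c v ⊆ F) ∧ (∀ v, #(c v) = ν v) ∧
      ∀ v, ∀ w ∈ N v, Disjoint (c v) (c w) := by
  obtain ⟨e, he⟩ := Countable.exists_injective_nat V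
  have hspec := greedyFinsets_spec e N F ν hN hν hF
  have avoid : ∀ v, ∀ w ∈ N v, e w < e v →
      Disjoint (greedyFinsets e N F ν v) (greedyFinsets e N F ν w) := fun v w hw hlt =>
    disjoint_of_subset_left (hspec v).1 <| disjoint_sdiff_self_left.mono_right <|
      subset_biUnion_of_mem _ (mem_filter.mpr ⟨hw, hlt⟩)
  refine ⟨greedyFinsets e N F ν, fun v => (hspec v).1.trans sdiff_subset, fun v => (hspec v).2,
    fun v w hw => ?_⟩
  rcases lt_or_gt_of_ne (he.ne (ne_of_mem_of_not_mem hw (hirrefl v))) with h | h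
  · exact avoid v w hw h
  · exact (avoid w v (hsymm v w hw) h).symm

end Greedy

theorem exists_disjoint_finsets_of_sub_mem_sub {G β : Type*} [AddCommGroup G] [DecidableEq G]
    [Countable G] [DecidableEq β] {T : Finset G} (hT : T.Nonempty) {F : Finset β} {ν : G → ℕ}
    {k : ℕ} (hν : ∀ x, ν x ≤ k) (hF : #T ^ 2 * k ≤ #F) :
    ∃ c : G → Finset β, (∀ x, c x ⊆ F) ∧ (∀ x, #(c x) = ν x) ∧
      ∀ x y, x ≠ y → x - y ∈ T - T → Disjoint (c x) (c y) := by
  have neg_mem : ∀ d ∈ T - T, -d ∈ T - T := fun d hd => by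
    obtain ⟨a, ha, b, hb, rfl⟩ := mem_sub.mp hd
    exact mem_sub.mpr ⟨b, hb, a, ha, by abel⟩
  have hcard : #((T - T).erase 0) ≤ #T ^ 2 - 1 := by
    have h0 : (0 : G) ∈ T - T := by
      obtain ⟨a, ha⟩ := hT
      exact mem_sub.mpr ⟨a, ha, a, ha, sub_self a⟩
    rw [card_erase_of_mem h0, sq]
    exact Nat.sub_le_sub_right card_sub_le 1
  obtain ⟨c, hcF, hc, hdisj⟩ := exists_disjoint_finsets_of_card_le
    (fun x => ((T - T).erase 0).image (x - ·)) F ν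
    (fun x y hy => by
      obtain ⟨d, hd, rfl⟩ := mem_image.mp hy
      exact mem_image.mpr ⟨-d, mem_erase.mpr ⟨neg_ne_zero.mpr (ne_of_mem_erase hd),
        neg_mem d (mem_of_mem_erase hd)⟩, by abel⟩)
    (fun x hx => by
      obtain ⟨d, hd, hxd⟩ := mem_image.mp hx
      exact ne_of_mem_erase hd (by simpa using hxd))
    (fun x => card_image_le.trans hcard) hν
    (by rwa [Nat.sub_add_cancel (Nat.one_le_pow _ _ (card_pos.mpr hT))])
  exact ⟨c, hcF, hc, fun x y hxy hsub => hdisj x y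
    (mem_image.mpr ⟨x - y, mem_erase.mpr ⟨sub_ne_zero.mpr hxy, hsub⟩, sub_sub_cancel x y⟩)⟩

section Tiles

variable {G α : Type*} [AddCommGroup G] (T : Finset G) (c : G → Finset (Set α))

def tiles : Set (Set (G × α)) :=
  {Q | ∃ x, ∃ A ∈ c x, Q = {p | p.1 - x ∈ T ∧ p.2 ∈ A}}

variable {T c}

theorem pairwiseDisjoint_tiles [DecidableEq G] {F : Finset (Set α)}
    (hF : (F : Set (Set α)).PairwiseDisjoint id) (hcF : ∀ x, c x ⊆ F)
    (hc : ∀ x y, x ≠ y → x - y ∈ T - T → Disjoint (c x) (c y)) :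
    (tiles T c).PairwiseDisjoint id := by
  rintro _ ⟨x, A, hA, rfl⟩ _ ⟨y, B, hB, rfl⟩ hne
  refine Set.disjoint_left.mpr fun p ⟨hpx, hpA⟩ ⟨hpy, hpB⟩ => ?_
  by_cases hAB : A = B
  · subst hAB
    have hxy : x ≠ y := by rintro rfl; exact hne rfl
    have hdiff : x - y ∈ T - T := mem_sub.mpr ⟨p.1 - y, hpy, p.1 - x, hpx, by abel⟩
    exact disjoint_left.mp (hc x y hxy hdiff) hA hB
  · exact Set.disjoint_left.mp (hF (hcF x hA) (hcF y hB) hAB) hpA hpB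

theorem setOf_mem_sUnion_tiles [DecidableEq (Set α)] (z : G) :
    {y | (z, y) ∈ ⋃₀ tiles T c} = ⋃ A ∈ T.biUnion (fun τ => c (z - τ)), A := by
  ext y
  simp only [Set.mem_sUnion, Set.mem_iUnion, mem_biUnion, exists_prop]
  constructor
  · rintro ⟨_, ⟨x, A, hA, rfl⟩, hzx, hyA⟩
    exact ⟨A, ⟨z - x, hzx, by rwa [sub_sub_cancel]⟩, hyA⟩
  · rintro ⟨A, ⟨τ, hτ, hA⟩, hyA⟩
    exact ⟨_, ⟨z - τ, A, hA, rfl⟩, by simpa using hτ, hyA⟩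

theorem card_biUnion_sub [DecidableEq G] [DecidableEq (Set α)]
    (hc : ∀ x y, x ≠ y → x - y ∈ T - T → Disjoint (c x) (c y)) (z : G) :
    #(T.biUnion fun τ => c (z - τ)) = ∑ τ ∈ T, #(c (z - τ)) :=
  card_biUnion fun τ hτ τ' hτ' hne =>
    hc _ _ (by simpa using hne) (mem_sub.mpr ⟨τ', hτ', τ, hτ, by abel⟩)

end Tiles

theorem coverHoles_general (t b : ℕ) (ht : 1 ≤ t)
    (T : Finset (Fin b → ℤ)) (hT : T.Nonempty)
    {α : Type*} (F : Finset (Set α))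
    (hFdisj : (F : Set (Set α)).PairwiseDisjoint id)
    (hFcard : (t - 1) * T.card ^ 2 ≤ F.card) :
    ∃ X : Set ((Fin b → ℤ) × α),
      (∃ P : Set (Set ((Fin b → ℤ) × α)),
        (∀ Q ∈ P, ∃ (x : Fin b → ℤ), ∃ A ∈ F,
          Q = {p : (Fin b → ℤ) × α | p.1 - x ∈ T ∧ p.2 ∈ A}) ∧
        P.PairwiseDisjoint id ∧ ⋃₀ P = X) ∧
      (∀ x : Fin b → ℤ, ∃ m : ℕ, m % t = 1 % t ∧
        ∃ 𝒮 : Finset (Set α), 𝒮 ⊆ F ∧ 𝒮.card = m ∧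
          {y : α | (x, y) ∈ X} = ⋃ A ∈ 𝒮, A) := by
  classical
  have : NeZero t := ⟨by omega⟩
  obtain ⟨φ, hφ⟩ := exists_addMonoidHom_injOn T
  obtain ⟨μ, hμ⟩ := exists_forall_sum_sub_eq_of_injOn (1 : ZMod t) hT hφ
  obtain ⟨c, hcF, hcard, hc⟩ := exists_disjoint_finsets_of_sub_mem_sub hT (F := F)
    (ν := fun x => (μ x).val) (k := t - 1) (fun x => Nat.le_sub_one_of_lt (ZMod.val_lt _))
    (by rwa [mul_comm])
  refine ⟨⋃₀ tiles T c, ⟨tiles T c, ?_, pairwiseDisjoint_tiles hFdisj hcF hc, rfl⟩, fun z => ?_⟩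
  · rintro _ ⟨x, A, hA, rfl⟩
    exact ⟨x, A, hcF x hA, rfl⟩
  refine ⟨_, ?_, _, biUnion_subset.mpr fun τ _ => hcF _, rfl, setOf_mem_sUnion_tiles z⟩
  rw [← ZMod.natCast_eq_natCast_iff', card_biUnion_sub hc, Nat.cast_sum]
  simp only [hcard, ZMod.natCast_zmod_val, hμ, Nat.cast_one]

/-- given a family `F` of at least `(t-1)|T|²` pairwise disjoint
subsets of `S`, there is `X ⊆ ℤ^b × S` that is a disjoint union of sets
`(T + x) × A` (`A ∈ F`) whose slice over each `x ∈ ℤ^b` is a union of exactly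
`m ≡ 1 (mod t)` distinct members of `F`. -/
theorem coverHoles (t b : ℕ) (ht : 1 ≤ t) (hb : 1 ≤ b)
    (T : Finset (Fin b → ℤ)) (hT : T.Nonempty)
    {α : Type*} (F : Finset (Set α))
    (hFdisj : (F : Set (Set α)).PairwiseDisjoint id)
    (hFcard : (t - 1) * T.card ^ 2 ≤ F.card) :
    ∃ X : Set ((Fin b → ℤ) × α),
      (∃ P : Set (Set ((Fin b → ℤ) × α)),
        (∀ Q ∈ P, ∃ (x : Fin b → ℤ), ∃ A ∈ F,
          Q = {p : (Fin b → ℤ) × α | p.1 - x ∈ T ∧ p.2 ∈ A}) ∧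
        P.PairwiseDisjoint id ∧ ⋃₀ P = X) ∧
      (∀ x : Fin b → ℤ, ∃ m : ℕ, m % t = 1 % t ∧
        ∃ 𝒮 : Finset (Set α), 𝒮 ⊆ F ∧ 𝒮.card = m ∧
          {y : α | (x, y) ∈ X} = ⋃ A ∈ 𝒮, A) :=
  coverHoles_general t b ht T hT F hFdisj hFcard
end

section
/- The one-dimensional tile T = {1, 2, 4, 5} ⊂ ℤ (i.e. the pattern XX.XX) tiles ℤ²: there is a partition of ℤ² into translates of T placed in the horizontal or vertical direction. -/
/-- A horizontal or vertical copy of the tile `T ⊆ ℤ` in `ℤ²`. -/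
def IsCopy2 (T : Set ℤ) (S : Set (ℤ × ℤ)) : Prop :=
  ∃ a b : ℤ,
    S = {p : ℤ × ℤ | ∃ t ∈ T, p = (a + t, b)} ∨
    S = {p : ℤ × ℤ | ∃ t ∈ T, p = (a, b + t)}

/-!
A tiling of `ℤ²` by axis-parallel copies of `T` amounts to labelling every cell with the
direction of its copy and its position `t ∈ T` in that copy, consistently: walking from a cell
with label `(d, t)` to the cell `s - t` steps further in direction `d` must reach the label
`(d, s)`. If the labelling factors through a homomorphism `φ : ℤ² → G` to a finite group,
consistency is a finite check on `G`. For `T = {1, 2, 4, 5}` a computer search finds such a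
labelling with `G = ℤ/2 × ℤ/8` and `φ (x, y) = (y, x + y)`, i.e. a tiling invariant under the
lattice spanned by `(8, 0)` and `(-2, 2)`; it consists of four copies of `T` modulo that lattice.
-/

open Set

def TilesZ2 (T : Set ℤ) : Prop :=
  ∃ P : Set (Set (ℤ × ℤ)), (∀ S ∈ P, IsCopy2 T S) ∧ P.PairwiseDisjoint id ∧ ⋃₀ P = univ

theorem pairwiseDisjoint_range_of_forall_mem {α : Type*} {τ : α → Set α}
    (h : ∀ p, ∀ q ∈ τ p, τ q = τ p) : (range τ).PairwiseDisjoint id := by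
  rintro _ ⟨p, rfl⟩ _ ⟨p', rfl⟩ hne
  exact disjoint_left.2 fun q hq hq' => hne ((h p q hq).symm.trans (h p' q hq'))

def axisCopy (T : Set ℤ) (a d : ℤ × ℤ) : Set (ℤ × ℤ) :=
  (fun t : ℤ => a + t • d) '' T

theorem isCopy2_axisCopy {T : Set ℤ} {a d : ℤ × ℤ} (hd : d = (1, 0) ∨ d = (0, 1)) :
    IsCopy2 T (axisCopy T a d) := by
  refine ⟨a.1, a.2, hd.imp (fun hd => ?_) fun hd => ?_⟩ <;>
  · ext p
    simp [axisCopy, hd, Prod.ext_iff, eq_comm]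

section Labelling

variable (T : Set ℤ) {G : Type*} [AddCommGroup G] (φ : ℤ × ℤ →+ G) (dir : G → ℤ × ℤ)
  (pos : G → ℤ)

def labelledCopy (p : ℤ × ℤ) : Set (ℤ × ℤ) :=
  axisCopy T (p - pos (φ p) • dir (φ p)) (dir (φ p))

def LabellingConsistent : Prop :=
  ∀ g, ∀ s ∈ T, dir (g + (s - pos g) • φ (dir g)) = dir g ∧ pos (g + (s - pos g) • φ (dir g)) = s

variable {T φ dir pos}

theorem mem_labelledCopy_self (hpos : ∀ g, pos g ∈ T) (p : ℤ × ℤ) :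
    p ∈ labelledCopy T φ dir pos p :=
  ⟨pos (φ p), hpos (φ p), sub_add_cancel _ _⟩

theorem labelledCopy_eq_of_mem (hcons : LabellingConsistent T φ dir pos)
    {p q : ℤ × ℤ} (hq : q ∈ labelledCopy T φ dir pos p) :
    labelledCopy T φ dir pos q = labelledCopy T φ dir pos p := by
  obtain ⟨s, hs, rfl⟩ := hq
  have hstep : p - pos (φ p) • dir (φ p) + s • dir (φ p) = p + (s - pos (φ p)) • dir (φ p) := by
    rw [sub_smul]; abel
  obtain ⟨hdir, hpos⟩ := hcons (φ p) s hs
  simp only [labelledCopy, hstep, map_add, map_zsmul, hdir, hpos]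
  congr 1
  rw [sub_smul]; abel

theorem tilesZ2_of_labelling (hdir : ∀ g, dir g = (1, 0) ∨ dir g = (0, 1))
    (hpos : ∀ g, pos g ∈ T)
    (hcons : LabellingConsistent T φ dir pos) :
    TilesZ2 T := by
  refine ⟨range (labelledCopy T φ dir pos), ?_, ?_, ?_⟩
  · rintro _ ⟨p, rfl⟩
    exact isCopy2_axisCopy (hdir (φ p))
  · exact pairwiseDisjoint_range_of_forall_mem fun p q => labelledCopy_eq_of_mem hcons
  · rw [sUnion_range, iUnion_eq_univ_iff]
    exact fun p => ⟨p, mem_labelledCopy_self hpos p⟩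

end Labelling

def xxPeriod : ℤ × ℤ →+ ZMod 2 × ZMod 8 :=
  AddMonoidHom.mk' (fun p => ((p.2 : ZMod 2), ((p.1 + p.2 : ℤ) : ZMod 8))) fun p q => by
    simp only [Prod.fst_add, Prod.snd_add, Int.cast_add, Prod.mk_add_mk]
    exact Prod.ext rfl (add_add_add_comm _ _ _ _)

def xxDir (g : ZMod 2 × ZMod 8) : ℤ × ℤ :=
  ![![(1, 0), (1, 0), (0, 1), (1, 0), (1, 0), (0, 1), (0, 1), (0, 1)],
    ![(0, 1), (1, 0), (1, 0), (0, 1), (0, 1), (0, 1), (1, 0), (1, 0)]] g.1 g.2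

def xxPos (g : ZMod 2 × ZMod 8) : ℤ :=
  ![![1, 2, 1, 4, 5, 2, 5, 4], ![5, 4, 5, 2, 1, 4, 1, 2]] g.1 g.2

/-- the tile `XX.XX`, i.e. `T = {1,2,4,5} ⊆ ℤ`, tiles `ℤ²`. -/
theorem xxdotxx_tiles_Z2 :
    ∃ P : Set (Set (ℤ × ℤ)),
      (∀ S ∈ P, IsCopy2 ({1, 2, 4, 5} : Set ℤ) S) ∧
      P.PairwiseDisjoint id ∧ ⋃₀ P = Set.univ :=
  tilesZ2_of_labelling (φ := xxPeriod) (dir := xxDir) (pos := xxPos) (by decide) (by decide) (by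
    simp only [LabellingConsistent, forall_mem_insert, mem_singleton_iff, forall_eq]
    decide)
end

section
/- Any finite non-empty (possibly disconnected) tile T ⊂ ℤ^n tiles some connected tile in ℤ^{2n}: there exists a connected finite subset S ⊂ ℤ^{2n} that can be partitioned into copies of T (translates of T × {0}^n under coordinate permutations and translations). -/
/-- Embed `ℤ^n` into `ℤ^d` (pad with zeros). -/
def embed {n d : ℕ} (t : Fin n → ℤ) : Fin d → ℤ :=
  fun j => if h : (j : ℕ) < n then t ⟨j, h⟩ else 0

/-- A copy of the tile `T ⊆ ℤ^n` in `ℤ^{2n}`: the image of `T × {0}^n` under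
a permutation of coordinates followed by a translation. -/
def IsPermCopy {n : ℕ} (T : Set (Fin n → ℤ))
    (S : Set (Fin (2 * n) → ℤ)) : Prop :=
  ∃ (σ : Equiv.Perm (Fin (2 * n))) (y : Fin (2 * n) → ℤ),
    S = (fun t : Fin n → ℤ => fun j => embed t (σ j) + y j) '' T

/-!
Enclose `T` in a box `B = [l, u]` and take `S = T × B ∪ B × T ⊆ ℤⁿ × ℤⁿ = ℤ^{2n}`. It is tiled
by the horizontal copies `T × {b}` for `b ∈ B` together with the vertical copies `{c} × T` for
`c ∈ B \ T`, the latter being images of `T × {0}` under the permutation swapping the two blocks of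
coordinates. It is connected because every fibre `{t} × B` and `B × {t}` with `t ∈ T` is a
connected box, and any point of `S` reaches `(t₀, t₀)` through at most two such fibres.
-/

open Set Relation

section Grid

variable {ι κ : Type*} [Fintype ι] [Fintype κ]

def GridAdj (S : Set (ι → ℤ)) (a b : ι → ℤ) : Prop :=
  a ∈ S ∧ b ∈ S ∧ ∑ i, |a i - b i| = 1

def GridConnected (S : Set (ι → ℤ)) : Prop :=
  ∀ x ∈ S, ∀ y ∈ S, ReflTransGen (GridAdj S) x y

theorem GridAdj.symm {S : Set (ι → ℤ)} {a b : ι → ℤ} (h : GridAdj S a b) : GridAdj S b a :=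
  ⟨h.2.1, h.1, by simpa only [abs_sub_comm] using h.2.2⟩

theorem gridConnected_of_forall_reflTransGen {S : Set (ι → ℤ)} (p : ι → ℤ)
    (h : ∀ x ∈ S, ReflTransGen (GridAdj S) x p) : GridConnected S := fun x hx y hy =>
  (h x hx).trans <|
    ReflTransGen.mono (fun _ _ hab => GridAdj.symm hab) _ _ (reflTransGen_swap.mpr (h y hy))

theorem Relation.ReflTransGen.gridAdj_map {S : Set (ι → ℤ)} {S' : Set (κ → ℤ)}
    (f : (ι → ℤ) → κ → ℤ) (hf : ∀ a b, ∑ k, |f a k - f b k| = ∑ i, |a i - b i|)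
    (hS : MapsTo f S S') {a b : ι → ℤ} (h : ReflTransGen (GridAdj S) a b) :
    ReflTransGen (GridAdj S') (f a) (f b) :=
  h.lift f fun _ _ hab => ⟨hS hab.1, hS hab.2.1, (hf _ _).trans hab.2.2⟩

theorem sum_abs_sub_update [DecidableEq ι] (a : ι → ℤ) (i : ι) (x : ℤ) :
    ∑ j, |a j - Function.update a i x j| = |a i - x| := by
  rw [Finset.sum_eq_single i (fun j _ hj => by simp [hj]) (by simp)]
  simp

theorem sum_natAbs_update_sub [DecidableEq ι] (a b : ι → ℤ) (i : ι) (x : ℤ) :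
    ∑ j, (Function.update a i x j - b j).natAbs + (a i - b i).natAbs
      = ∑ j, (a j - b j).natAbs + (x - b i).natAbs := by
  simp only [Function.apply_update (fun j y => (y - b j).natAbs),
    Finset.sum_update_of_mem (Finset.mem_univ i),
    ← Finset.add_sum_erase _ _ (Finset.mem_univ i), Finset.sdiff_singleton_eq_erase]
  ring

/-- Induction on the ℓ¹ distance to `b`: one unit step towards `b` in a coordinate where the two
points differ stays in the box. -/
theorem gridConnected_Icc (l u : ι → ℤ) : GridConnected (Icc l u) := by
  classical
  intro a ha b hb
  induction hd : ∑ i, (a i - b i).natAbs generalizing a with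
  | zero =>
    obtain rfl : a = b := funext fun i => by
      have := (Finset.sum_eq_zero_iff.mp hd) i (Finset.mem_univ i)
      omega
    exact ReflTransGen.refl
  | succ d ih =>
    have hne : ∑ i, (a i - b i).natAbs ≠ 0 := by omega
    obtain ⟨i, -, hi⟩ := Finset.exists_ne_zero_of_sum_ne_zero hne
    obtain ⟨x, hstep, hcloser, hx⟩ : ∃ x, |a i - x| = 1 ∧ (x - b i).natAbs + 1 = (a i - b i).natAbs
        ∧ x ∈ Icc (l i) (u i) := by
      have : l i ≤ a i ∧ a i ≤ u i ∧ l i ≤ b i ∧ b i ≤ u i := ⟨ha.1 i, ha.2 i, hb.1 i, hb.2 i⟩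
      rcases lt_or_gt_of_ne (Int.natAbs_ne_zero.mp hi) with h | h
      · exact ⟨a i + 1, by simp, by omega, by omega, by omega⟩
      · exact ⟨a i - 1, by simp, by omega, by omega, by omega⟩
    have ha' : Function.update a i x ∈ Icc l u := by
      refine ⟨fun j => ?_, fun j => ?_⟩ <;> rcases eq_or_ne j i with rfl | hj
      · simpa using hx.1
      · simpa [hj] using ha.1 j
      · simpa using hx.2
      · simpa [hj] using ha.2 j
    refine ReflTransGen.head ⟨ha, ha', by rw [sum_abs_sub_update, hstep]⟩ (ih _ ha' ?_)
    have := sum_natAbs_update_sub a b i x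
    omega

end Grid

section Copies

variable {n : ℕ}

def finSumFinEquivTwoMul (n : ℕ) : Fin n ⊕ Fin n ≃ Fin (2 * n) :=
  finSumFinEquiv.trans (finCongr (two_mul n).symm)

/-- `ℤⁿ × ℤⁿ ≅ ℤ^{2n}`, the first factor occupying the coordinates `0, …, n - 1`. -/
def concatEquiv (n : ℕ) : ((Fin n → ℤ) × (Fin n → ℤ)) ≃ₗ[ℤ] (Fin (2 * n) → ℤ) :=
  (LinearEquiv.sumArrowLequivProdArrow _ _ ℤ ℤ).symm.trans
    (LinearEquiv.funCongrLeft ℤ ℤ (finSumFinEquivTwoMul n).symm)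

@[simp]
theorem concatEquiv_apply_inl (u v : Fin n → ℤ) (i : Fin n) :
    concatEquiv n (u, v) (finSumFinEquivTwoMul n (.inl i)) = u i := by
  simp [concatEquiv, LinearMap.funLeft]

@[simp]
theorem concatEquiv_apply_inr (u v : Fin n → ℤ) (i : Fin n) :
    concatEquiv n (u, v) (finSumFinEquivTwoMul n (.inr i)) = v i := by
  simp [concatEquiv, LinearMap.funLeft]

theorem sum_abs_sub_concatEquiv (u v u' v' : Fin n → ℤ) :
    ∑ j, |concatEquiv n (u, v) j - concatEquiv n (u', v') j|
      = ∑ i, |u i - u' i| + ∑ i, |v i - v' i| := by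
  rw [← (finSumFinEquivTwoMul n).sum_comp, Fintype.sum_sum_type]
  simp

theorem embed_eq_concatEquiv (t : Fin n → ℤ) :
    (embed t : Fin (2 * n) → ℤ) = concatEquiv n (t, 0) := by
  funext j
  obtain ⟨i | i, rfl⟩ := (finSumFinEquivTwoMul n).surjective j <;>
    simp only [concatEquiv_apply_inl, concatEquiv_apply_inr, Pi.zero_apply] <;>
    simp [embed, finSumFinEquivTwoMul]

theorem isPermCopy_concatEquiv_image_prod_singleton (T : Set (Fin n → ℤ)) (b : Fin n → ℤ) :
    IsPermCopy T (concatEquiv n '' (T ×ˢ {b})) := by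
  refine ⟨1, concatEquiv n (0, b), ?_⟩
  rw [prod_singleton, image_image]
  congr 1
  funext t
  simp only [Equiv.Perm.coe_one, id, embed_eq_concatEquiv, ← Pi.add_def, ← map_add,
    Prod.mk_add_mk, add_zero, zero_add]

theorem isPermCopy_concatEquiv_image_singleton_prod (T : Set (Fin n → ℤ)) (c : Fin n → ℤ) :
    IsPermCopy T (concatEquiv n '' ({c} ×ˢ T)) := by
  let e := finSumFinEquivTwoMul n
  refine ⟨e.symm.trans ((Equiv.sumComm _ _).trans e), concatEquiv n (c, 0), ?_⟩
  rw [singleton_prod, image_image]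
  congr 1
  funext t j
  obtain ⟨i | i, rfl⟩ := e.surjective j <;> simp [e, embed_eq_concatEquiv]

end Copies

section Cross

variable {α : Type*}

def crossTiles (T B : Set α) : Set (Set (α × α)) :=
  (fun b => T ×ˢ {b}) '' B ∪ (fun c => {c} ×ˢ T) '' (B \ T)

theorem sUnion_crossTiles {T B : Set α} (hTB : T ⊆ B) :
    ⋃₀ crossTiles T B = T ×ˢ B ∪ B ×ˢ T := by
  ext ⟨x, y⟩
  simp only [crossTiles, sUnion_union, sUnion_image, mem_union, mem_iUnion, mem_prod,
    mem_singleton_iff, mem_sdiff, exists_prop]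
  constructor
  · rintro (⟨b, hb, hx, rfl⟩ | ⟨c, hc, rfl, hy⟩)
    exacts [.inl ⟨hx, hb⟩, .inr ⟨hc.1, hy⟩]
  · rintro (⟨hx, hy⟩ | ⟨hx, hy⟩)
    · exact .inl ⟨y, hy, hx, rfl⟩
    · by_cases hxT : x ∈ T
      exacts [.inl ⟨y, hTB hy, hxT, rfl⟩, .inr ⟨x, ⟨hx, hxT⟩, rfl, hy⟩]

theorem pairwiseDisjoint_crossTiles (T B : Set α) : (crossTiles T B).PairwiseDisjoint id := by
  rintro _ (⟨b, -, rfl⟩ | ⟨c, hc, rfl⟩) _ (⟨b', -, rfl⟩ | ⟨c', hc', rfl⟩) hne <;>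
    refine disjoint_left.mpr fun ⟨x, y⟩ h h' => ?_ <;>
    simp only [id, mem_prod, mem_singleton_iff] at h h'
  · exact hne (by rw [← h.2, ← h'.2])
  · exact hc'.2 (h'.1 ▸ h.1)
  · exact hc.2 (h.1 ▸ h'.1)
  · exact hne (by rw [← h.1, ← h'.1])

end Cross

theorem gridConnected_concatEquiv_image_cross {n : ℕ} {T B : Set (Fin n → ℤ)} {t₀ : Fin n → ℤ}
    (ht₀ : t₀ ∈ T) (hTB : T ⊆ B) (hB : GridConnected B) :
    GridConnected (concatEquiv n '' (T ×ˢ B ∪ B ×ˢ T)) := by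
  set S := concatEquiv n '' (T ×ˢ B ∪ B ×ˢ T)
  have moveSnd : ∀ a ∈ T, ∀ v ∈ B, ∀ v' ∈ B,
      ReflTransGen (GridAdj S) (concatEquiv n (a, v)) (concatEquiv n (a, v')) :=
    fun a ha v hv v' hv' => (hB v hv v' hv').gridAdj_map (fun v => concatEquiv n (a, v))
      (by simp [sum_abs_sub_concatEquiv]) fun v hv => mem_image_of_mem _ (.inl ⟨ha, hv⟩)
  have moveFst : ∀ b ∈ T, ∀ u ∈ B, ∀ u' ∈ B,
      ReflTransGen (GridAdj S) (concatEquiv n (u, b)) (concatEquiv n (u', b)) :=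
    fun b hb u hu u' hu' => (hB u hu u' hu').gridAdj_map (fun u => concatEquiv n (u, b))
      (by simp [sum_abs_sub_concatEquiv]) fun u hu => mem_image_of_mem _ (.inr ⟨hu, hb⟩)
  refine gridConnected_of_forall_reflTransGen (concatEquiv n (t₀, t₀)) ?_
  rintro _ ⟨⟨a, b⟩, ⟨ha, hb⟩ | ⟨ha, hb⟩, rfl⟩
  · exact (moveSnd a ha b hb t₀ (hTB ht₀)).trans (moveFst t₀ ht₀ a (hTB ha) t₀ (hTB ht₀))
  · exact (moveFst b hb a ha t₀ (hTB ht₀)).trans (moveSnd t₀ ht₀ b (hTB hb) t₀ (hTB ht₀))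

/-- every finite non-empty (possibly disconnected) tile
`T ⊆ ℤ^n` tiles some connected finite tile `S ⊆ ℤ^{2n}`: `S` is connected in
the ℓ¹-adjacency graph and partitions into copies of `T`. -/
theorem disconnected_tile_tiles_connected {n : ℕ} (T : Set (Fin n → ℤ))
    (hfin : T.Finite) (hne : T.Nonempty) :
    ∃ S : Set (Fin (2 * n) → ℤ),
      S.Finite ∧ S.Nonempty ∧
      (∀ x ∈ S, ∀ y ∈ S,
        Relation.ReflTransGen
          (fun a b => a ∈ S ∧ b ∈ S ∧ (∑ i, |a i - b i|) = 1) x y) ∧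
      ∃ P : Set (Set (Fin (2 * n) → ℤ)),
        (∀ Q ∈ P, IsPermCopy T Q) ∧ P.PairwiseDisjoint id ∧ ⋃₀ P = S := by
  obtain ⟨l, hl⟩ := hfin.bddBelow
  obtain ⟨u, hu⟩ := hfin.bddAbove
  have hTB : T ⊆ Icc l u := fun t ht => ⟨hl ht, hu ht⟩
  refine ⟨concatEquiv n '' (T ×ˢ Icc l u ∪ Icc l u ×ˢ T),
    ((hfin.prod (finite_Icc l u)).union ((finite_Icc l u).prod hfin)).image _,
    ((hne.prod (hne.mono hTB)).inl).image _,
    gridConnected_concatEquiv_image_cross hne.some_mem hTB (gridConnected_Icc l u),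
    image (concatEquiv n) '' crossTiles T (Icc l u), ?_, ?_, ?_⟩
  · rintro _ ⟨_, ⟨b, -, rfl⟩ | ⟨c, -, rfl⟩, rfl⟩
    exacts [isPermCopy_concatEquiv_image_prod_singleton T b,
      isPermCopy_concatEquiv_image_singleton_prod T c]
  · rintro _ ⟨Q, hQ, rfl⟩ _ ⟨Q', hQ', rfl⟩ hQQ'
    exact (disjoint_image_iff (concatEquiv n).injective).mpr
      (pairwiseDisjoint_crossTiles T _ hQ hQ' fun h => hQQ' (h ▸ rfl))
  · rw [← image_sUnion, sUnion_crossTiles hTB]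
end
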